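/- arXiv:2507.10554 — 3 statements merged into one kernel-verified Lean document; each statement's English description precedes it below -/
import Mathlib

section
/- Let n ≥ 5. Every Lie bracket [-,-] on μ₀ⁿ making (μ₀ⁿ, ·, [-,-]) a transposed 1-Poisson algebra yields an algebra isomorphic to one of the following: the trivial structure TP₁(0,…,0); TP₁(1,0,…,0,α,0,…,0) with the entry α ∈ ℂ in position s for some 3 ≤ s ≤ n; TP₁(0,α,0,…,0) for some α ∈ ℂ; or TP₁(0,…,0,1ₚ,0,…,0) (single nonzero entry 1 in position p) for some 4 ≤ p ≤ n. -/
open Finset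

/-- The null-filiform associative multiplication on `ℂⁿ = Fin n → ℂ`.
The basis vector `e_i` (1-based) corresponds to the coordinate `i - 1`, and
`e_i · e_j = e_{i+j}` if `i + j ≤ n`, and `0` otherwise. -/
noncomputable def nfMul (n : ℕ) (x y : Fin n → ℂ) : Fin n → ℂ :=
  fun k => ∑ i : Fin n, ∑ j : Fin n,
    if (i : ℕ) + (j : ℕ) + 1 = (k : ℕ) then x i * y j else 0

/-- The 1-based basis vector `e i` of `ℂⁿ` (zero if `i` is out of range `1,…,n`). -/
noncomputable def nfE (n : ℕ) (i : ℕ) : Fin n → ℂ :=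
  fun k => if (k : ℕ) + 1 = i then 1 else 0

/-- The coefficient of the basis vector `e i` (1-based) in `x`. -/
noncomputable def nfCoeff (n : ℕ) (x : Fin n → ℂ) (i : ℕ) : ℂ :=
  ∑ k : Fin n, if (k : ℕ) + 1 = i then x k else 0

/-- A Lie bracket (bilinear, alternating, satisfying the Jacobi identity)
on a complex vector space. -/
structure LieBracketOn (L : Type*) [AddCommGroup L] [Module ℂ L] where
  br : L → L → L
  add_left : ∀ x y z, br (x + y) z = br x z + br y z
  smul_left : ∀ (c : ℂ) (x y : L), br (c • x) y = c • br x y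
  add_right : ∀ x y z, br x (y + z) = br x y + br x z
  smul_right : ∀ (c : ℂ) (x y : L), br x (c • y) = c • br x y
  alt : ∀ x, br x x = 0
  jacobi : ∀ x y z, br (br x y) z + br (br y z) x + br (br z x) y = 0

/-- `(μ₀ⁿ, ·, [-,-])` is a transposed `δ`-Poisson algebra:
`δ • (z · [x,y]) = [z·x, y] + [x, z·y]`. -/
noncomputable def IsTransposedPoisson (n : ℕ) (δ : ℂ) (B : LieBracketOn (Fin n → ℂ)) : Prop :=
  ∀ x y z, δ • nfMul n z (B.br x y) = B.br (nfMul n z x) y + B.br x (nfMul n z y)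

/-- `(μ₀ⁿ, ·, [-,-])` is a `δ`-Poisson algebra:
`[x, y·z] = δ • ([x,y]·z + y·[x,z])`. -/
noncomputable def IsDeltaPoisson (n : ℕ) (δ : ℂ) (B : LieBracketOn (Fin n → ℂ)) : Prop :=
  ∀ x y z, B.br x (nfMul n y z) = δ • (nfMul n (B.br x y) z + nfMul n y (B.br x z))

/-- The bracket of the transposed 0-Poisson algebra `TP₀(α₁,…,αₙ)` on `μ₀ⁿ`:
determined by `[e₁,e₂] = ∑_{t=1}^n αₜ eₜ` and `[eᵢ,eⱼ] = 0` for all other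
pairs `i < j`. -/
noncomputable def brTP0 (n : ℕ) (α : ℕ → ℂ) (x y : Fin n → ℂ) : Fin n → ℂ :=
  (nfCoeff n x 1 * nfCoeff n y 2 - nfCoeff n x 2 * nfCoeff n y 1) •
    ∑ t ∈ Finset.Icc 1 n, α t • nfE n t

/-- The bracket of the transposed 1-Poisson algebra `TP₁(α₂,…,αₙ)` on `μ₀ⁿ`:
determined by `[e₁,eᵢ] = ∑_{t=i}^n α_{t-i+2} eₜ` for `2 ≤ i ≤ n` and
`[eᵢ,eⱼ] = 0` for `2 ≤ i < j ≤ n`. -/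
noncomputable def brTP1 (n : ℕ) (α : ℕ → ℂ) (x y : Fin n → ℂ) : Fin n → ℂ :=
  ∑ i ∈ Finset.Icc 2 n,
    (nfCoeff n x 1 * nfCoeff n y i - nfCoeff n x i * nfCoeff n y 1) •
      ∑ t ∈ Finset.Icc i n, α (t + 2 - i) • nfE n t

/-- The bracket of the transposed `δ`-Poisson algebra `TP_δ(a, b, c)`
(`a = α_{n-2}`, `b = α_{n-1}`, `c = αₙ`) on `μ₀ⁿ`: determined by
`[e₁,e₂] = a e_{n-2} + b e_{n-1} + c eₙ`, `[e₁,e₃] = δ(a e_{n-1} + b eₙ)`,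
`[e₂,e₃] = ((δ²-δ)/2) a eₙ`, `[e₁,e₄] = ((δ²+δ)/2) a eₙ`, and `[eᵢ,eⱼ] = 0`
for all other pairs `i < j`. -/
noncomputable def brTPd (n : ℕ) (δ a b c : ℂ) (x y : Fin n → ℂ) : Fin n → ℂ :=
  (nfCoeff n x 1 * nfCoeff n y 2 - nfCoeff n x 2 * nfCoeff n y 1) •
      (a • nfE n (n-2) + b • nfE n (n-1) + c • nfE n n)
  + (nfCoeff n x 1 * nfCoeff n y 3 - nfCoeff n x 3 * nfCoeff n y 1) •
      (δ • (a • nfE n (n-1) + b • nfE n n))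
  + (nfCoeff n x 2 * nfCoeff n y 3 - nfCoeff n x 3 * nfCoeff n y 2) •
      (((δ^2 - δ)/2 * a) • nfE n n)
  + (nfCoeff n x 1 * nfCoeff n y 4 - nfCoeff n x 4 * nfCoeff n y 1) •
      (((δ^2 + δ)/2 * a) • nfE n n)

/-- Two bracket structures on `μ₀ⁿ` are isomorphic (as transposed δ-Poisson
algebras): there is a linear bijection preserving both `·` and `[-,-]`. -/
noncomputable def TPIso (n : ℕ) (B B' : (Fin n → ℂ) → (Fin n → ℂ) → (Fin n → ℂ)) : Prop :=
  ∃ φ : (Fin n → ℂ) ≃ₗ[ℂ] (Fin n → ℂ),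
    (∀ x y, φ (nfMul n x y) = nfMul n (φ x) (φ y)) ∧
    ∀ x y, φ (B x y) = B' (φ x) (φ y)

namespace TPaux
open Polynomial Finset

variable {n : ℕ}

/-- Read off coefficients 1..n of a polynomial into a vector. -/
noncomputable def V (n : ℕ) (p : ℂ[X]) : Fin n → ℂ := fun k => p.coeff ((k : ℕ) + 1)

/-- The polynomial associated to a vector. -/
noncomputable def toP (n : ℕ) (x : Fin n → ℂ) : ℂ[X] :=
  ∑ s ∈ Icc 1 n, C (nfCoeff n x s) * X ^ s

lemma sum_Icc_one (f : ℕ → ℂ) : ∑ s ∈ Icc 1 n, f s = ∑ k : Fin n, f ((k : ℕ) + 1) := by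
  rw [show Icc 1 n = Ico 1 (n+1) by rfl, Finset.sum_Ico_eq_sum_range]
  simp only [Nat.add_sub_cancel, Finset.sum_range fun i => f (1 + i)]
  exact Finset.sum_congr rfl fun k _ => by rw [Nat.add_comm]

lemma sum_Icc_one' {M : Type*} [AddCommMonoid M] (f : ℕ → M) :
    ∑ s ∈ Icc 1 n, f s = ∑ k : Fin n, f ((k : ℕ) + 1) := by
  rw [show Icc 1 n = Ico 1 (n+1) by rfl, Finset.sum_Ico_eq_sum_range]
  simp only [Nat.add_sub_cancel, Finset.sum_range fun i => f (1 + i)]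
  exact Finset.sum_congr rfl fun k _ => by rw [Nat.add_comm]

lemma nfCoeff_apply (x : Fin n → ℂ) (k : Fin n) : nfCoeff n x ((k : ℕ) + 1) = x k := by
  unfold nfCoeff
  rw [Finset.sum_eq_single k]
  · simp
  · intro b _ hb
    rw [if_neg]
    intro h
    exact hb (Fin.ext (by omega))
  · intro h; exact absurd (Finset.mem_univ k) h

lemma coeff_toP (x : Fin n → ℂ) (d : ℕ) :
    (toP n x).coeff d = if d ∈ Icc 1 n then nfCoeff n x d else 0 := by
  unfold toP
  rw [Polynomial.finset_sum_coeff]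
  rw [Finset.sum_congr rfl (fun s _ => by rw [Polynomial.coeff_C_mul, Polynomial.coeff_X_pow])]
  by_cases h : d ∈ Icc 1 n
  · rw [if_pos h, Finset.sum_eq_single d]
    · simp
    · intro b _ hb; simp [Ne.symm hb]
    · intro hd; exact absurd h hd
  · rw [if_neg h, Finset.sum_eq_zero]
    intro s hs
    rw [if_neg, mul_zero]
    intro he; subst he; exact h hs

lemma coeff_toP_zero (x : Fin n → ℂ) : (toP n x).coeff 0 = 0 := by
  rw [coeff_toP]; simp

lemma V_toP (x : Fin n → ℂ) : V n (toP n x) = x := by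
  funext k
  show (toP n x).coeff ((k:ℕ)+1) = x k
  rw [coeff_toP, if_pos (by simp [Finset.mem_Icc]), nfCoeff_apply]

lemma V_eq_of_dvd {a b : ℂ[X]} (h : X ^ (n + 1) ∣ a - b) : V n a = V n b := by
  funext k
  have := (Polynomial.X_pow_dvd_iff.mp h) ((k:ℕ)+1) (by omega)
  rw [Polynomial.coeff_sub, sub_eq_zero] at this
  exact this

lemma toP_eq_sum (x : Fin n → ℂ) : toP n x = ∑ k : Fin n, C (x k) * X ^ ((k:ℕ)+1) := by
  unfold toP
  rw [sum_Icc_one' (f := fun s => C (nfCoeff n x s) * X ^ s)]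
  exact Finset.sum_congr rfl fun k _ => by rw [nfCoeff_apply]

lemma nfMul_V (x y : Fin n → ℂ) : nfMul n x y = V n (toP n x * toP n y) := by
  funext k
  show _ = (toP n x * toP n y).coeff ((k:ℕ)+1)
  rw [toP_eq_sum, toP_eq_sum, Finset.sum_mul_sum]
  rw [Polynomial.finset_sum_coeff]
  unfold nfMul
  refine Finset.sum_congr rfl fun i _ => ?_
  rw [Polynomial.finset_sum_coeff]
  refine Finset.sum_congr rfl fun j _ => ?_
  have : C (x i) * X ^ ((i:ℕ)+1) * (C (y j) * X ^ ((j:ℕ)+1))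
      = C (x i * y j) * X ^ ((i:ℕ)+(j:ℕ)+2) := by
    rw [C_mul]; ring
  rw [this, Polynomial.coeff_C_mul, Polynomial.coeff_X_pow]
  by_cases h : (i:ℕ) + (j:ℕ) + 1 = (k:ℕ)
  · rw [if_pos h, if_pos (by omega), mul_one]
  · rw [if_neg h, if_neg (by omega), mul_zero]

lemma nfE_eq_V (i : ℕ) : nfE n i = V n (X ^ i) := by
  funext k
  show _ = (X ^ i).coeff ((k:ℕ)+1)
  rw [Polynomial.coeff_X_pow]
  rfl

lemma toP_nfE {i : ℕ} (h1 : 1 ≤ i) (h2 : i ≤ n) : toP n (nfE n i) = X ^ i := by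
  ext d
  rw [coeff_toP, Polynomial.coeff_X_pow]
  have hc : nfCoeff n (nfE n i) d = if d = i then 1 else 0 := by
    unfold nfCoeff nfE
    by_cases hd : d = i
    · subst hd
      rw [if_pos rfl, Finset.sum_eq_single (⟨d-1, by omega⟩ : Fin n)]
      · simp [Nat.sub_add_cancel h1]
      · intro b _ hb
        rw [if_neg]
        intro h; exact hb (Fin.ext (by simp; omega))
      · intro h; exact absurd (Finset.mem_univ _) h
    · rw [if_neg hd, Finset.sum_eq_zero]
      intro b _
      by_cases hbd : (b:ℕ)+1 = d
      · rw [if_pos hbd, if_neg (by omega)]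
      · rw [if_neg hbd]
  by_cases h : d ∈ Icc 1 n
  · rw [if_pos h, hc]
  · rw [if_neg h, eq_comm, if_neg]
    intro hd; subst hd
    exact h (Finset.mem_Icc.mpr ⟨h1, h2⟩)

lemma toP_nfE_big {i : ℕ} (h2 : n < i) : nfE n i = 0 := by
  funext k
  show (if (k:ℕ)+1 = i then (1:ℂ) else 0) = 0
  rw [if_neg (by omega)]

lemma nfMul_zero_left (y : Fin n → ℂ) : nfMul n 0 y = 0 := by
  funext k; unfold nfMul
  simp

lemma nfMul_zero_right (y : Fin n → ℂ) : nfMul n y 0 = 0 := by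
  funext k; unfold nfMul
  simp

lemma V_zero : V n (0 : ℂ[X]) = 0 := by funext k; simp [V]

lemma V_add (a b : ℂ[X]) : V n (a + b) = V n a + V n b := by
  funext k; simp [V]

lemma V_sub (a b : ℂ[X]) : V n (a - b) = V n a - V n b := by
  funext k; simp [V]

lemma V_Cmul (c : ℂ) (a : ℂ[X]) : V n (C c * a) = c • V n a := by
  funext k; simp [V, Polynomial.coeff_C_mul]

lemma V_sum {ι : Type*} (s : Finset ι) (f : ι → ℂ[X]) :
    V n (∑ i ∈ s, f i) = ∑ i ∈ s, V n (f i) := by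
  funext k
  show (∑ i ∈ s, f i).coeff _ = _
  rw [Polynomial.finset_sum_coeff]
  simp [V]

lemma toP_add (x y : Fin n → ℂ) : toP n (x + y) = toP n x + toP n y := by
  rw [toP_eq_sum, toP_eq_sum, toP_eq_sum, ← Finset.sum_add_distrib]
  refine Finset.sum_congr rfl fun k _ => ?_
  show C ((x k) + (y k)) * _ = _
  rw [C_add]; ring

lemma toP_smul (c : ℂ) (x : Fin n → ℂ) : toP n (c • x) = C c * toP n x := by
  rw [toP_eq_sum, toP_eq_sum, Finset.mul_sum]
  refine Finset.sum_congr rfl fun k _ => ?_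
  show C (c * x k) * _ = _
  rw [C_mul]; ring

/-- key truncation lemma -/
lemma toP_V_dvd (g : ℂ[X]) (hg : g.coeff 0 = 0) :
    X ^ (n+1) ∣ g - C (g.coeff 0) - toP n (V n g) ∧ (toP n (V n g)).coeff 0 = 0 := by
  constructor
  · rw [Polynomial.X_pow_dvd_iff]
    intro d hd
    rw [Polynomial.coeff_sub, Polynomial.coeff_sub, coeff_toP]
    by_cases h0 : d = 0
    · subst h0; simp [hg]
    · rw [if_pos (by simp [Finset.mem_Icc]; omega)]
      have : nfCoeff n (V n g) d = g.coeff d := by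
        obtain ⟨k, hk⟩ : ∃ k : Fin n, (k:ℕ)+1 = d := ⟨⟨d-1, by omega⟩, by simp; omega⟩
        rw [← hk, nfCoeff_apply]
        rfl
      rw [this, Polynomial.coeff_C, if_neg h0]
      ring
  · exact coeff_toP_zero _

lemma toP_V (g : ℂ[X]) (hg : g.coeff 0 = 0) :
    X ^ (n+1) ∣ g - toP n (V n g) := by
  have := (toP_V_dvd (n := n) g hg).1
  rwa [hg, map_zero, sub_zero] at this

lemma nfMul_EE (a b : ℕ) (ha : 1 ≤ a) (hb : 1 ≤ b) :
    nfMul n (nfE n a) (nfE n b) = nfE n (a + b) := by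
  by_cases hA : a ≤ n
  · by_cases hB : b ≤ n
    · rw [nfMul_V, toP_nfE ha hA, toP_nfE hb hB, ← pow_add, nfE_eq_V]
    · rw [toP_nfE_big (by omega : n < b), nfMul_zero_right,
        toP_nfE_big (by omega : n < a + b)]
  · rw [toP_nfE_big (by omega : n < a), nfMul_zero_left,
      toP_nfE_big (by omega : n < a + b)]

lemma nfMul_E_left (a : ℕ) (ha : 1 ≤ a) (hA : a ≤ n) (v : Fin n → ℂ) :
    nfMul n (nfE n a) v = V n (X ^ a * toP n v) := by
  rw [nfMul_V, toP_nfE ha hA]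

lemma c0_comp (p q : ℂ[X]) (hq : q.coeff 0 = 0) : (p.comp q).coeff 0 = p.coeff 0 := by
  rw [Polynomial.coeff_zero_eq_eval_zero, Polynomial.eval_comp,
    ← Polynomial.coeff_zero_eq_eval_zero, hq, ← Polynomial.coeff_zero_eq_eval_zero]

lemma eval0_coeff (p : ℂ[X]) : p.eval 0 = p.coeff 0 :=
  (Polynomial.coeff_zero_eq_eval_zero p).symm

lemma c1_comp (p q : ℂ[X]) (hq : q.coeff 0 = 0) :
    (p.comp q).coeff 1 = p.coeff 1 * q.coeff 1 := by
  have h := Polynomial.derivative_comp p q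
  have e1 : ∀ r : ℂ[X], r.coeff 1 = (Polynomial.derivative r).eval 0 := by
    intro r
    rw [eval0_coeff, Polynomial.coeff_derivative]
    push_cast; ring
  rw [e1, h, Polynomial.eval_mul, Polynomial.eval_comp, eval0_coeff q, hq]
  rw [← e1, ← e1]
  ring

lemma X_dvd_comp (p q : ℂ[X]) (hp : p.coeff 0 = 0) (hq : q.coeff 0 = 0) :
    X ∣ p.comp q := by
  rw [Polynomial.X_dvd_iff]
  rw [c0_comp p q hq, hp]

lemma pow_dvd_pow_of_X_dvd {F : ℂ[X]} (hF : F.coeff 0 = 0) (r : ℕ) :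
    X ^ r ∣ F ^ r :=
  pow_dvd_pow_of_dvd (Polynomial.X_dvd_iff.mpr hF) r

lemma coeff_pow_lt {F : ℂ[X]} (hF : F.coeff 0 = 0) {r d : ℕ} (hd : d < r) :
    (F ^ r).coeff d = 0 :=
  Polynomial.X_pow_dvd_iff.mp (pow_dvd_pow_of_X_dvd hF r) d hd

lemma coeff_pow_self {F : ℂ[X]} (hF : F.coeff 0 = 0) (r : ℕ) :
    (F ^ r).coeff r = (F.coeff 1) ^ r := by
  induction r with
  | zero => simp
  | succ r ih =>
    rw [pow_succ, Polynomial.coeff_mul]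
    rw [Finset.sum_eq_single ((r : ℕ), 1)]
    · rw [ih, pow_succ]
    · rintro ⟨a, b⟩ hab hne
      rw [Finset.HasAntidiagonal.mem_antidiagonal] at hab
      simp only at hab ⊢
      rcases Nat.lt_or_ge a r with h | h
      · rw [coeff_pow_lt hF h, zero_mul]
      · have hb : b = 0 := by
          rcases Nat.eq_or_lt_of_le h with h' | h'
          · exfalso; apply hne; subst h'; simp; omega
          · omega
        subst hb
        rw [hF, mul_zero]
    · intro h
      exact absurd (Finset.HasAntidiagonal.mem_antidiagonal.mpr (by simp)) h

/-- comp with a scaled X -/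
lemma comp_C_mul_X_coeff (p : ℂ[X]) (a : ℂ) (d : ℕ) :
    (p.comp (C a * X)).coeff d = p.coeff d * a ^ d := by
  rw [Polynomial.comp_eq_sum_left, Polynomial.sum_def]
  have : ∀ e : ℕ, (C (p.coeff e) * (C a * X) ^ e) = C (p.coeff e * a ^ e) * X ^ e := by
    intro e
    rw [mul_pow, ← Polynomial.C_pow, C_mul]
    ring
  rw [Polynomial.finset_sum_coeff]
  have step : ∀ e ∈ p.support, (C (p.coeff e) * (C a * X) ^ e).coeff d
      = p.coeff e * a ^ e * (if d = e then 1 else 0) := by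
    intro e _
    rw [this e, Polynomial.coeff_C_mul, Polynomial.coeff_X_pow]
  rw [Finset.sum_congr rfl step]
  by_cases h : d ∈ p.support
  · rw [Finset.sum_eq_single d]
    · simp
    · intro b _ hb; simp [Ne.symm hb]
    · intro hd; exact absurd h hd
  · rw [Polynomial.notMem_support_iff] at h
    rw [Finset.sum_eq_zero, h, zero_mul]
    intro e he
    by_cases hde : d = e
    · subst hde; exact absurd h (Polynomial.mem_support_iff.mp he)
    · rw [if_neg hde, mul_zero]

lemma V_high {a : ℂ[X]} (h : X ^ (n+1) ∣ a) : V n a = 0 := by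
  rw [show a = a - 0 by ring] at h
  rw [V_eq_of_dvd h, V_zero]

lemma toP_V_gen (g : ℂ[X]) : X ^ (n+1) ∣ g - C (g.coeff 0) - toP n (V n g) := by
  rw [Polynomial.X_pow_dvd_iff]
  intro d hd
  rw [Polynomial.coeff_sub, Polynomial.coeff_sub, coeff_toP]
  by_cases h0 : d = 0
  · subst h0
    simp
  · rw [if_pos (by simp [Finset.mem_Icc]; omega)]
    have : nfCoeff n (V n g) d = g.coeff d := by
      obtain ⟨k, hk⟩ : ∃ k : Fin n, (k:ℕ)+1 = d := ⟨⟨d-1, by omega⟩, by simp; omega⟩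
      rw [← hk, nfCoeff_apply]
      rfl
    rw [this, Polynomial.coeff_C, if_neg h0]
    ring

section Phi
variable {F : ℂ[X]}

/-- The substitution map. -/
noncomputable def phiFun (F : ℂ[X]) (x : Fin n → ℂ) : Fin n → ℂ := V n ((toP n x).comp F)

lemma phiFun_add (x y : Fin n → ℂ) :
    phiFun (n := n) F (x + y) = phiFun F x + phiFun F y := by
  unfold phiFun
  rw [toP_add, Polynomial.add_comp, V_add]

lemma phiFun_smul (c : ℂ) (x : Fin n → ℂ) :
    phiFun (n := n) F (c • x) = c • phiFun F x := by
  unfold phiFun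
  rw [toP_smul, Polynomial.mul_comp, Polynomial.C_comp, V_Cmul]

lemma phiFun_V (hF0 : F.coeff 0 = 0) (g : ℂ[X]) :
    phiFun (n := n) F (V n g) = V n (g.comp F) := by
  unfold phiFun
  obtain ⟨h, hh⟩ := toP_V_gen (n := n) g
  have : (toP n (V n g)).comp F = g.comp F - C (g.coeff 0) - F ^ (n+1) * h.comp F := by
    have : toP n (V n g) = g - C (g.coeff 0) - X ^ (n+1) * h := by
      rw [← hh]; ring
    rw [this, Polynomial.sub_comp, Polynomial.sub_comp, Polynomial.C_comp,
      Polynomial.mul_comp, Polynomial.X_pow_comp]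
  rw [this]
  rw [V_sub, V_sub, V_high (dvd_mul_of_dvd_left (pow_dvd_pow_of_X_dvd hF0 (n+1)) _)]
  have : V n (C (g.coeff 0)) = 0 := by
    funext k
    show (C (g.coeff 0)).coeff ((k:ℕ)+1) = 0
    rw [Polynomial.coeff_C, if_neg (by omega)]
  rw [this]
  ring

lemma phiFun_mul (hF0 : F.coeff 0 = 0) (x y : Fin n → ℂ) :
    phiFun (n := n) F (nfMul n x y) = nfMul n (phiFun F x) (phiFun F y) := by
  rw [nfMul_V, phiFun_V hF0, nfMul_V (phiFun F x)]
  rw [Polynomial.mul_comp]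
  -- toP (phiFun F x) differs from (toP x).comp F by C-term (zero) and X^{n+1} junk
  have key : ∀ z : Fin n → ℂ, ∃ h : ℂ[X],
      toP n (phiFun (n := n) F z) = (toP n z).comp F - X ^ (n+1) * h := by
    intro z
    obtain ⟨h, hh⟩ := toP_V_gen (n := n) ((toP n z).comp F)
    refine ⟨h, ?_⟩
    have h0 : ((toP n z).comp F).coeff 0 = 0 := by
      rw [c0_comp _ _ hF0, coeff_toP_zero]
    rw [h0, map_zero, sub_zero] at hh
    unfold phiFun
    rw [← hh]
    ring
  obtain ⟨hx, ex⟩ := key x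
  obtain ⟨hy, ey⟩ := key y
  rw [ex, ey]
  apply V_eq_of_dvd
  have : (toP n x).comp F * (toP n y).comp F -
      ((toP n x).comp F - X ^ (n+1) * hx) * ((toP n y).comp F - X ^ (n+1) * hy)
      = X ^ (n+1) * (hx * ((toP n y).comp F - X ^ (n+1) * hy) + hy * (toP n x).comp F) := by
    ring
  rw [this]
  exact Dvd.intro _ rfl

/-- phi as a linear map -/
noncomputable def phiLin (F : ℂ[X]) : (Fin n → ℂ) →ₗ[ℂ] (Fin n → ℂ) where
  toFun := phiFun (n := n) F
  map_add' := phiFun_add (F := F)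
  map_smul' := phiFun_smul (F := F)

lemma phiFun_ker (hF0 : F.coeff 0 = 0) (hF1 : F.coeff 1 ≠ 0)
    (x : Fin n → ℂ) (hx : phiFun (n := n) F x = 0) : x = 0 := by
  have main : ∀ m : ℕ, ∀ k : Fin n, (k : ℕ) = m → x k = 0 := by
    intro m
    induction m using Nat.strong_induction_on with
    | _ m ih =>
      intro k hk
      have hcoeff : ((toP n x).comp F).coeff ((k:ℕ)+1) = 0 := congrFun hx k
      rw [toP_eq_sum, Polynomial.sum_comp, Polynomial.finset_sum_coeff] at hcoeff
      have step : ∀ j ∈ (Finset.univ : Finset (Fin n)),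
          ((C (x j) * X ^ ((j:ℕ)+1)).comp F).coeff ((k:ℕ)+1)
          = x j * (F ^ ((j:ℕ)+1)).coeff ((k:ℕ)+1) := by
        intro j _
        rw [Polynomial.mul_comp, Polynomial.C_comp, Polynomial.X_pow_comp,
          Polynomial.coeff_C_mul]
      rw [Finset.sum_congr rfl step] at hcoeff
      rw [Finset.sum_eq_single k] at hcoeff
      · rw [coeff_pow_self hF0] at hcoeff
        have := pow_ne_zero ((k:ℕ)+1) hF1
        exact (mul_eq_zero.mp hcoeff).resolve_right this
      · intro j _ hj
        rcases Nat.lt_or_ge (j:ℕ) (k:ℕ) with h | h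
        · rw [ih (j:ℕ) (by omega) j rfl, zero_mul]
        · have : (j:ℕ) > (k:ℕ) := by
            rcases Nat.eq_or_lt_of_le h with h' | h'
            · exact absurd (Fin.ext h'.symm) hj
            · exact h'
          rw [coeff_pow_lt hF0 (by omega), mul_zero]
      · intro h; exact absurd (Finset.mem_univ _) h
  funext k
  exact main (k:ℕ) k rfl

lemma phiLin_inj (hF0 : F.coeff 0 = 0) (hF1 : F.coeff 1 ≠ 0) :
    Function.Injective (phiLin (n := n) F) := by
  intro a b hab
  have : phiLin (n := n) F (a - b) = 0 := by
    rw [map_sub, hab, sub_self]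
  have h2 : phiFun (n := n) F (a - b) = 0 := this
  exact sub_eq_zero.mp (phiFun_ker hF0 hF1 (a - b) h2)

/-- phi as a linear equivalence. -/
noncomputable def phiEquiv (F : ℂ[X]) (hF0 : F.coeff 0 = 0) (hF1 : F.coeff 1 ≠ 0) :
    (Fin n → ℂ) ≃ₗ[ℂ] (Fin n → ℂ) :=
  LinearEquiv.ofBijective (phiLin (n := n) F)
    ⟨phiLin_inj hF0 hF1, (LinearMap.injective_iff_surjective).mp (phiLin_inj hF0 hF1)⟩

lemma phiEquiv_apply (F : ℂ[X]) (hF0 : F.coeff 0 = 0) (hF1 : F.coeff 1 ≠ 0) (x : Fin n → ℂ) :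
    phiEquiv (n := n) F hF0 hF1 x = phiFun F x :=
  LinearEquiv.ofBijective_apply _ _

end Phi

/-- The polynomial `∑ α_s X^s`. -/
noncomputable def Pof (n : ℕ) (α : ℕ → ℂ) : ℂ[X] := ∑ s ∈ Icc 2 n, C (α s) * X ^ s

/-- The polynomial `∑ α_s X^(s-2)`. -/
noncomputable def Qof (n : ℕ) (α : ℕ → ℂ) : ℂ[X] := ∑ s ∈ Icc 2 n, C (α s) * X ^ (s - 2)

/-- The shifted polynomial of a vector. -/
noncomputable def Sh2 (n : ℕ) (x : Fin n → ℂ) : ℂ[X] :=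
  ∑ i ∈ Icc 2 n, C (nfCoeff n x i) * X ^ (i - 2)

lemma Pof_eq (α : ℕ → ℂ) : Pof n α = X ^ 2 * Qof n α := by
  unfold Pof Qof
  rw [Finset.mul_sum]
  refine Finset.sum_congr rfl fun s hs => ?_
  rw [Finset.mem_Icc] at hs
  have hx : (X : ℂ[X]) ^ s = X ^ 2 * X ^ (s - 2) := by
    rw [← pow_add]; congr 1; omega
  rw [hx]; ring

lemma coeff_Pof (α : ℕ → ℂ) (d : ℕ) :
    (Pof n α).coeff d = if d ∈ Icc 2 n then α d else 0 := by
  unfold Pof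
  rw [Polynomial.finset_sum_coeff]
  rw [Finset.sum_congr rfl (fun s _ => by rw [Polynomial.coeff_C_mul, Polynomial.coeff_X_pow])]
  by_cases h : d ∈ Icc 2 n
  · rw [if_pos h, Finset.sum_eq_single d]
    · simp
    · intro b _ hb; simp [Ne.symm hb]
    · intro hd; exact absurd h hd
  · rw [if_neg h, Finset.sum_eq_zero]
    intro s hs
    rw [if_neg, mul_zero]
    intro he; subst he; exact h hs

lemma X2_Sh2 (hn : 1 ≤ n) (x : Fin n → ℂ) :
    X ^ 2 * Sh2 n x = toP n x - C (nfCoeff n x 1) * X := by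
  have h1 : toP n x = C (nfCoeff n x 1) * X + X ^ 2 * Sh2 n x := by
    unfold toP Sh2
    rw [Finset.mul_sum]
    have hsplit : Icc 1 n = insert 1 (Icc 2 n) := by
      ext a
      simp [Finset.mem_Icc, Finset.mem_insert]
      omega
    rw [hsplit, Finset.sum_insert (by simp)]
    rw [pow_one]
    congr 1
    refine Finset.sum_congr rfl fun s hs => ?_
    rw [Finset.mem_Icc] at hs
    rw [show X ^ 2 * (C (nfCoeff n x s) * X ^ (s-2)) = C (nfCoeff n x s) * (X^2 * X^(s-2)) by ring,
      ← pow_add, show 2 + (s - 2) = s by omega]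
  rw [h1]; ring

/-- the inner sum of brTP1 as a polynomial window -/
lemma brTP1_inner (α : ℕ → ℂ) {i : ℕ} (hi : i ∈ Icc 2 n) :
    (∑ t ∈ Icc i n, α (t + 2 - i) • nfE n t) = V n (X ^ (i-2) * Pof n α) := by
  rw [Finset.mem_Icc] at hi
  funext k
  have lhs : (∑ t ∈ Icc i n, α (t + 2 - i) • nfE n t) k
      = if (k:ℕ)+1 ∈ Icc i n then α ((k:ℕ)+3-i) else 0 := by
    rw [Finset.sum_apply]
    by_cases h : (k:ℕ)+1 ∈ Icc i n
    · rw [if_pos h, Finset.sum_eq_single ((k:ℕ)+1)]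
      · show α _ * _ = _
        unfold nfE
        rw [if_pos rfl, mul_one,
          show (k:ℕ)+1+2-i = (k:ℕ)+3-i by omega]
      · intro t _ ht
        show α _ * _ = 0
        unfold nfE
        rw [if_neg (fun hh => ht hh.symm), mul_zero]
      · intro hh; exact absurd h hh
    · rw [if_neg h, Finset.sum_eq_zero]
      intro t ht
      show α _ * _ = 0
      unfold nfE
      rw [if_neg, mul_zero]
      intro hh
      exact h (hh ▸ ht)
  rw [lhs]
  show _ = (X ^ (i-2) * Pof n α).coeff ((k:ℕ)+1)
  rw [mul_comm, Polynomial.coeff_mul_X_pow', coeff_Pof]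
  have hk := k.isLt
  by_cases h : i ≤ (k:ℕ)+1
  · rw [if_pos (Finset.mem_Icc.mpr ⟨h, by omega⟩),
      if_pos (show i-2 ≤ (k:ℕ)+1 by omega),
      show (k:ℕ)+1-(i-2) = (k:ℕ)+3-i by omega,
      if_pos (Finset.mem_Icc.mpr ⟨by omega, by omega⟩)]
  · rw [if_neg (fun hm => h (Finset.mem_Icc.mp hm).1)]
    by_cases h2 : i - 2 ≤ (k:ℕ)+1
    · rw [if_pos h2, if_neg (fun hm => by have := Finset.mem_Icc.mp hm; omega)]
    · rw [if_neg h2]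

lemma brTP1_V (hn : 1 ≤ n) (α : ℕ → ℂ) (x y : Fin n → ℂ) :
    brTP1 n α x y = nfCoeff n x 1 • V n (Sh2 n y * Pof n α)
      - nfCoeff n y 1 • V n (Sh2 n x * Pof n α) := by
  unfold brTP1
  rw [Finset.sum_congr rfl (fun i hi => by rw [brTP1_inner α hi])]
  have expand : ∀ z w : Fin n → ℂ,
      (∑ i ∈ Icc 2 n, (nfCoeff n z i * nfCoeff n w 1) • V n (X ^ (i-2) * Pof n α))
      = nfCoeff n w 1 • V n (Sh2 n z * Pof n α) := by
    intro z w
    unfold Sh2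
    rw [Finset.sum_mul, V_sum, Finset.smul_sum]
    refine Finset.sum_congr rfl fun i hi => ?_
    rw [mul_assoc, V_Cmul, smul_smul, mul_comm]
  calc (∑ i ∈ Icc 2 n, (nfCoeff n x 1 * nfCoeff n y i - nfCoeff n x i * nfCoeff n y 1)
          • V n (X ^ (i-2) * Pof n α))
      = (∑ i ∈ Icc 2 n, (nfCoeff n y i * nfCoeff n x 1) • V n (X ^ (i-2) * Pof n α))
        - (∑ i ∈ Icc 2 n, (nfCoeff n x i * nfCoeff n y 1) • V n (X ^ (i-2) * Pof n α)) := by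
        rw [← Finset.sum_sub_distrib]
        refine Finset.sum_congr rfl fun i _ => ?_
        rw [← sub_smul]
        congr 1
        ring
    _ = _ := by rw [expand, expand]

lemma nfCoeff_one_eq (hn : 1 ≤ n) (v : Fin n → ℂ) :
    nfCoeff n v 1 = v ⟨0, by omega⟩ := by
  have := nfCoeff_apply v ⟨0, by omega⟩
  simpa using this

lemma nfCoeff_eq_coeff_toP (hn : 1 ≤ n) (v : Fin n → ℂ) :
    nfCoeff n v 1 = (toP n v).coeff 1 := by
  rw [coeff_toP, if_pos (by simp [Finset.mem_Icc]; omega)]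

lemma nfCoeff1_phi (hn : 1 ≤ n) {F : ℂ[X]} (hF0 : F.coeff 0 = 0) (z : Fin n → ℂ) :
    nfCoeff n (phiFun (n := n) F z) 1 = F.coeff 1 * nfCoeff n z 1 := by
  rw [nfCoeff_one_eq hn, nfCoeff_one_eq hn]
  show ((toP n z).comp F).coeff (0 + 1) = _
  rw [zero_add, c1_comp _ _ hF0]
  rw [← nfCoeff_eq_coeff_toP hn, nfCoeff_one_eq hn]
  ring

lemma iso_transfer (hn : 1 ≤ n) (β α : ℕ → ℂ) (F : ℂ[X])
    (hF0 : F.coeff 0 = 0) (hF1 : F.coeff 1 ≠ 0)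
    (hM : X ^ (n+1) ∣ ((Pof n β).comp F - C (F.coeff 1) * F ^ 2 * Qof n α)) :
    TPIso n (brTP1 n β) (brTP1 n α) := by
  refine ⟨phiEquiv (n := n) F hF0 hF1, fun x y => ?_, fun x y => ?_⟩
  · rw [phiEquiv_apply, phiEquiv_apply, phiEquiv_apply]
    exact phiFun_mul hF0 x y
  -- bracket preservation
  set a₁ := F.coeff 1 with ha₁
  set u := F.divX with hu
  have hFu : F = X * u := by
    conv_lhs => rw [← Polynomial.X_mul_divX_add F]
    rw [hF0, map_zero, add_zero]
  have hu0 : u.coeff 0 = a₁ := by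
    rw [hu, Polynomial.coeff_divX]
  have hune : u ≠ 0 := fun h => hF1 (by rw [← hu0, h, Polynomial.coeff_zero])
  set cx := nfCoeff n x 1 with hcx
  set cy := nfCoeff n y 1 with hcy
  set Ay := (Sh2 n y).comp F with hAy
  set Ax := (Sh2 n x).comp F with hAx
  set Gy := (toP n y).comp F with hGy
  set Gx := (toP n x).comp F with hGx
  set P := (Pof n β).comp F with hP
  set Qα := Qof n α with hQα
  -- hiy / hix
  have hiy : F ^ 2 * Ay = Gy - C cy * F := by
    have := congrArg (fun p => Polynomial.comp p F) (X2_Sh2 hn y)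
    simpa only [Polynomial.mul_comp, Polynomial.X_pow_comp, Polynomial.sub_comp,
      Polynomial.C_comp, Polynomial.X_comp] using this
  have hix : F ^ 2 * Ax = Gx - C cx * F := by
    have := congrArg (fun p => Polynomial.comp p F) (X2_Sh2 hn x)
    simpa only [Polynomial.mul_comp, Polynomial.X_pow_comp, Polynomial.sub_comp,
      Polynomial.C_comp, Polynomial.X_comp] using this
  -- witnesses for truncation of G
  have hGy0 : Gy.coeff 0 = 0 := by rw [hGy, c0_comp _ _ hF0, coeff_toP_zero]
  have hGx0 : Gx.coeff 0 = 0 := by rw [hGx, c0_comp _ _ hF0, coeff_toP_zero]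
  obtain ⟨Wy, hWy⟩ : ∃ W, Gy - toP n (phiFun (n := n) F y) = X ^ (n+1) * W := by
    have := toP_V_gen (n := n) Gy
    rw [hGy0, map_zero, sub_zero] at this
    exact this
  obtain ⟨Wx, hWx⟩ : ∃ W, Gx - toP n (phiFun (n := n) F x) = X ^ (n+1) * W := by
    have := toP_V_gen (n := n) Gx
    rw [hGx0, map_zero, sub_zero] at this
    exact this
  set Sy := Sh2 n (phiFun (n := n) F y) with hSy
  set Sx := Sh2 n (phiFun (n := n) F x) with hSx
  have hwy : X ^ 2 * Sy = Gy - X ^ (n+1) * Wy - C a₁ * C cy * X := by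
    rw [hSy, X2_Sh2 hn, nfCoeff1_phi hn hF0, ← hcy, ← ha₁]
    rw [C_mul]
    linear_combination -hWy
  have hwx : X ^ 2 * Sx = Gx - X ^ (n+1) * Wx - C a₁ * C cx * X := by
    rw [hSx, X2_Sh2 hn, nfCoeff1_phi hn hF0, ← hcx, ← ha₁]
    rw [C_mul]
    linear_combination -hWx
  obtain ⟨Z, hZ⟩ := hM
  have hv : P = C a₁ * F ^ 2 * Qα + X ^ (n+1) * Z := by
    rw [hP, hQα]
    linear_combination hZ
  -- rewrite F as X*u in the polynomial hypotheses
  rw [hFu] at hiy hix hv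
  -- assemble both sides
  rw [brTP1_V hn β x y, brTP1_V hn α]
  rw [map_sub, map_smul, map_smul, phiEquiv_apply, phiEquiv_apply, phiEquiv_apply,
    phiEquiv_apply, phiFun_V hF0, phiFun_V hF0, Polynomial.mul_comp, Polynomial.mul_comp]
  rw [nfCoeff1_phi hn hF0, nfCoeff1_phi hn hF0, ← hcx, ← hcy, ← ha₁]
  rw [← hAy, ← hAx, ← hP, ← hSy, ← hSx]
  rw [Pof_eq, ← hQα]
  rw [← V_Cmul, ← V_Cmul, ← V_Cmul, ← V_Cmul, ← V_sub, ← V_sub]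
  apply V_eq_of_dvd
  set M := C a₁ * Qα * (C cx * Wy - C cy * Wx) + Z * (C cx * Ay - C cy * Ax) with hMdef
  refine ⟨M, ?_⟩
  have hcan : X ^ 4 * u ^ 2 ≠ 0 :=
    mul_ne_zero (pow_ne_zero _ Polynomial.X_ne_zero) (pow_ne_zero _ hune)
  apply mul_left_cancel₀ hcan
  have expand : C (a₁ * cx) = C a₁ * C cx := by rw [C_mul]
  have expand2 : C (a₁ * cy) = C a₁ * C cy := by rw [C_mul]
  rw [expand, expand2]
  linear_combination (X^4*u^2*(C cx*Ay - C cy*Ax)) * hv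
    - (C a₁ * C cx * X^4*u^2*Qα) * hwy + (C a₁ * C cy * X^4*u^2*Qα) * hwx
    + (C a₁ * C cx * X^4*u^2*Qα) * hiy - (C a₁ * C cy * X^4*u^2*Qα) * hix

section PartI
variable {B : LieBracketOn (Fin n → ℂ)}

lemma br_zero_left (y : Fin n → ℂ) : B.br 0 y = 0 := by
  have := B.smul_left 0 0 y
  rwa [zero_smul, zero_smul] at this

lemma br_zero_right (y : Fin n → ℂ) : B.br y 0 = 0 := by
  have := B.smul_right 0 y 0
  rwa [zero_smul, zero_smul] at this

lemma br_anti (x y : Fin n → ℂ) : B.br x y = - B.br y x := by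
  have h := B.alt (x + y)
  rw [B.add_left, B.add_right, B.add_right, B.alt, B.alt] at h
  have : B.br x y + B.br y x = 0 := by
    have h' := h
    abel_nf at h'
    linear_combination (norm := module) h'
  linear_combination (norm := module) this

lemma br_sum_left {ι : Type*} (s : Finset ι) (f : ι → (Fin n → ℂ)) (y : Fin n → ℂ) :
    B.br (∑ i ∈ s, f i) y = ∑ i ∈ s, B.br (f i) y := by
  classical
  induction s using Finset.induction_on with
  | empty => simpa using br_zero_left y
  | insert a s hni ih =>
    rw [Finset.sum_insert hni, B.add_left, ih, Finset.sum_insert hni]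

lemma br_sum_right {ι : Type*} (s : Finset ι) (f : ι → (Fin n → ℂ)) (y : Fin n → ℂ) :
    B.br y (∑ i ∈ s, f i) = ∑ i ∈ s, B.br y (f i) := by
  classical
  induction s using Finset.induction_on with
  | empty => simpa using br_zero_right y
  | insert a s hni ih =>
    rw [Finset.sum_insert hni, B.add_right, ih, Finset.sum_insert hni]

lemma basis_expand (x : Fin n → ℂ) : x = ∑ k : Fin n, x k • nfE n ((k:ℕ)+1) := by
  funext m
  rw [Finset.sum_apply, Finset.sum_eq_single m]
  · show x m = x m * _
    unfold nfE
    rw [if_pos rfl, mul_one]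
  · intro b _ hb
    show x b * _ = 0
    unfold nfE
    rw [if_neg (fun h => hb (Fin.ext (by omega))), mul_zero]
  · intro h; exact absurd (Finset.mem_univ _) h

lemma nfMul_add_right (z a b : Fin n → ℂ) :
    nfMul n z (a + b) = nfMul n z a + nfMul n z b := by
  rw [nfMul_V, nfMul_V, nfMul_V, toP_add, mul_add, V_add]

section withhB
variable (hB : IsTransposedPoisson n 1 B)
include hB

lemma hTPk (k i j : ℕ) (hk : 1 ≤ k) (hi : 1 ≤ i) (hj : 1 ≤ j) :
    nfMul n (nfE n k) (B.br (nfE n i) (nfE n j))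
      = B.br (nfE n (k+i)) (nfE n j) + B.br (nfE n i) (nfE n (k+j)) := by
  have := hB (nfE n i) (nfE n j) (nfE n k)
  rw [one_smul, nfMul_EE k i hk hi, nfMul_EE k j hk hj] at this
  exact this

lemma hTvV (hn : 1 ≤ n) (g : ℂ[X]) (hg : g.coeff 0 = 0) :
    nfMul n (nfE n 1) (V n g) = V n (X * g) := by
  rw [nfMul_E_left 1 le_rfl hn, pow_one]
  apply V_eq_of_dvd
  obtain ⟨h1, hh1⟩ := toP_V (n := n) g hg
  refine ⟨-h1 * X, ?_⟩
  have : X * toP n (V n g) - X * g = - (X * (g - toP n (V n g))) := by ring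
  rw [this, hh1]
  ring

omit hB in
lemma toPmulX_c0 (p : ℂ[X]) : (X * p).coeff 0 = 0 := by
  rw [Polynomial.mul_coeff_zero, Polynomial.coeff_X_zero, zero_mul]

lemma step_h2 (hn : 2 ≤ n) (j : ℕ) (hj : 1 ≤ j) :
    B.br (nfE n 2) (nfE n (j+1)) = 0 := by
  have hn1 : 1 ≤ n := by omega
  set w := B.br (nfE n 1) (nfE n j) with hw
  -- two computations of e1·(e1·w)
  have c1 : nfMul n (nfE n 1) (nfMul n (nfE n 1) w) = nfMul n (nfE n 2) w := by
    rw [nfMul_E_left 1 le_rfl hn1 w, pow_one, hTvV hB hn1 _ (toPmulX_c0 _),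
      nfMul_E_left 2 (by omega) hn w]
    congr 1
    ring
  have h11 := hTPk hB 1 1 j le_rfl le_rfl hj
  have h12 := hTPk hB 1 2 j le_rfl (by omega) hj
  have h11' := hTPk hB 1 1 (j+1) le_rfl le_rfl (by omega)
  have h21 := hTPk hB 2 1 j (by omega) le_rfl hj
  rw [← hw] at h11 h21
  rw [show (1+1:ℕ) = 2 from rfl, show 1+j = j+1 by omega] at h11
  rw [show (1+2:ℕ) = 3 from rfl, show 1+j = j+1 by omega] at h12
  rw [show (1+1:ℕ) = 2 from rfl, show 1+(j+1) = j+2 by omega] at h11'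
  rw [show (2+1:ℕ) = 3 from rfl, show 2+j = j+2 by omega] at h21
  have hTT : nfMul n (nfE n 1) (nfMul n (nfE n 1) w)
      = B.br (nfE n 3) (nfE n j) + B.br (nfE n 2) (nfE n (j+1))
        + (B.br (nfE n 2) (nfE n (j+1)) + B.br (nfE n 1) (nfE n (j+2))) := by
    rw [h11, nfMul_add_right, h12, h11']
  have key : B.br (nfE n 2) (nfE n (j+1)) + B.br (nfE n 2) (nfE n (j+1)) = 0 := by
    have heq := c1
    rw [hTT, h21] at heq
    linear_combination (norm := module) heq
  have h2s : (2 : ℂ) • B.br (nfE n 2) (nfE n (j+1)) = 0 := by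
    rw [two_smul]
    exact key
  exact (smul_eq_zero.mp h2s).resolve_left (by norm_num)

lemma step2 (hn : 2 ≤ n) (i : ℕ) (hi : 2 ≤ i) : ∀ j, 2 ≤ j →
    B.br (nfE n i) (nfE n j) = 0 := by
  induction i, hi using Nat.le_induction with
  | base =>
    intro j hj
    obtain ⟨j', rfl⟩ : ∃ j', j = j' + 1 := ⟨j - 1, by omega⟩
    exact step_h2 hB hn j' (by omega)
  | succ i hi2 ih =>
    intro j hj
    have h := hTPk hB 1 i j le_rfl (by omega) (by omega)
    rw [ih j hj, nfMul_zero_right, show 1 + j = j + 1 by omega,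
      ih (j+1) (by omega), add_zero, show 1 + i = i + 1 by omega] at h
    exact h.symm

lemma step3 (hn : 2 ≤ n) (j : ℕ) (hj : 2 ≤ j) :
    B.br (nfE n 1) (nfE n j)
      = V n (X ^ (j - 2) * toP n (B.br (nfE n 1) (nfE n 2))) := by
  set Pw := toP n (B.br (nfE n 1) (nfE n 2)) with hPw
  have hPw0 : Pw.coeff 0 = 0 := coeff_toP_zero _
  induction j, hj using Nat.le_induction with
  | base =>
    rw [show (2-2 : ℕ) = 0 from rfl, pow_zero, one_mul, hPw, V_toP]
  | succ j hj2 ih =>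
    have h := hTPk hB 1 1 j le_rfl le_rfl (by omega)
    rw [show (1+1:ℕ) = 2 from rfl, show 1+j = j+1 by omega] at h
    rw [step2 hB hn 2 le_rfl j (by omega), zero_add] at h
    rw [← h, ih, hTvV hB (by omega) _ (by
      rcases Nat.eq_or_lt_of_le hj2 with h2 | h2
      · rw [← h2, pow_zero, one_mul]
        exact hPw0
      · rw [Polynomial.mul_coeff_zero, Polynomial.coeff_X_pow, if_neg (by omega), zero_mul])]
    have hjj : j - 2 + 1 = j + 1 - 2 := by omega
    rw [← mul_assoc, ← pow_succ', hjj]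

lemma step4 (hn : 2 ≤ n) :
    (toP n (B.br (nfE n 1) (nfE n 2))).coeff 1 = 0 := by
  have h := hTPk hB (n-1) 1 2 (by omega) le_rfl (by omega)
  rw [show n-1+1 = n by omega, show n-1+2 = n+1 by omega] at h
  rw [step2 hB hn n (by omega) 2 le_rfl, toP_nfE_big (by omega : n < n+1),
    br_zero_right, zero_add] at h
  rw [nfMul_E_left (n-1) (by omega) (by omega)] at h
  have hc := congrFun h ⟨n-1, by omega⟩
  have h2 : (X ^ (n-1) * toP n (B.br (nfE n 1) (nfE n 2))).coeff ((n-1)+1) = 0 := hc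
  rwa [mul_comm, Polynomial.coeff_mul_X_pow', if_pos (by omega),
    show n-1+1-(n-1) = 1 by omega] at h2

/-- Part I: the bracket equals `brTP1` with coefficients from `[e₁,e₂]`. -/
lemma partI (hn : 2 ≤ n) :
    B.br = brTP1 n (nfCoeff n (B.br (nfE n 1) (nfE n 2))) := by
  have hn1 : 1 ≤ n := by omega
  set w := B.br (nfE n 1) (nfE n 2) with hw
  set Pw := toP n w with hPw
  have hP1 : Pw.coeff 1 = 0 := step4 hB hn
  have hPofw : Pof n (nfCoeff n w) = Pw := by
    unfold Pof
    rw [hPw]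
    unfold toP
    rw [show Icc 1 n = insert 1 (Icc 2 n) by
      ext a; simp [Finset.mem_Icc, Finset.mem_insert]; omega,
      Finset.sum_insert (by simp)]
    have : nfCoeff n w 1 = 0 := by
      rw [nfCoeff_eq_coeff_toP hn1, ← hPw]
      exact hP1
    rw [this, map_zero, zero_mul, zero_add]
  funext x y
  -- the "window" vector for index m : Fin n
  set Vl : Fin n → (Fin n → ℂ) := fun m =>
    if 1 ≤ (m:ℕ) then V n (X ^ ((m:ℕ)-1) * Pw) else 0 with hVl
  have hval : ∀ k l : Fin n, B.br (nfE n ((k:ℕ)+1)) (nfE n ((l:ℕ)+1))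
      = (if (k:ℕ) = 0 then (1:ℂ) else 0) • Vl l - (if (l:ℕ) = 0 then (1:ℂ) else 0) • Vl k := by
    intro k l
    by_cases hk : (k:ℕ) = 0
    · by_cases hl : (l:ℕ) = 0
      · have hkl : k = l := Fin.ext (by omega)
        subst hkl
        rw [sub_self]
        exact B.alt _
      · have h1 : B.br (nfE n ((k:ℕ)+1)) (nfE n ((l:ℕ)+1)) = Vl l := by
          rw [hk, hVl]
          simp only [if_pos (show 1 ≤ (l:ℕ) by omega)]
          rw [show (0+1 : ℕ) = 1 from rfl, step3 hB hn ((l:ℕ)+1) (by omega), ← hPw,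
            show (l:ℕ)+1-2 = (l:ℕ)-1 by omega]
        rw [h1, if_pos hk, if_neg hl, one_smul, zero_smul, sub_zero]
    · by_cases hl : (l:ℕ) = 0
      · have h1 : B.br (nfE n ((k:ℕ)+1)) (nfE n ((l:ℕ)+1)) = - Vl k := by
          rw [hl, br_anti, hVl]
          simp only [if_pos (show 1 ≤ (k:ℕ) by omega)]
          rw [show (0+1 : ℕ) = 1 from rfl, step3 hB hn ((k:ℕ)+1) (by omega), ← hPw,
            show (k:ℕ)+1-2 = (k:ℕ)-1 by omega]
        rw [h1, if_neg hk, if_pos hl, one_smul, zero_smul, zero_sub]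
      · rw [step2 hB hn _ (by omega) _ (by omega), if_neg hk, if_neg hl,
          zero_smul, zero_smul, sub_zero]
  -- expand bilinearly
  have hexp : B.br x y
      = ∑ k : Fin n, ∑ l : Fin n, (x k * y l) • B.br (nfE n ((k:ℕ)+1)) (nfE n ((l:ℕ)+1)) := by
    conv_lhs => rw [basis_expand x, basis_expand y]
    rw [br_sum_left]
    refine Finset.sum_congr rfl fun k _ => ?_
    rw [B.smul_left, br_sum_right, Finset.smul_sum]
    refine Finset.sum_congr rfl fun l _ => ?_
    rw [B.smul_right, smul_smul]
  have hsum : B.br x y = x ⟨0, by omega⟩ • (∑ l : Fin n, y l • Vl l)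
      - y ⟨0, by omega⟩ • (∑ k : Fin n, x k • Vl k) := by
    rw [hexp]
    rw [Finset.sum_congr rfl (fun k _ => Finset.sum_congr rfl (fun l _ => by
      rw [hval k l, smul_sub, smul_smul, smul_smul]))]
    rw [Finset.sum_congr rfl (fun k _ => Finset.sum_sub_distrib _ _)]
    rw [Finset.sum_sub_distrib]
    congr 1
    · rw [Finset.smul_sum]
      rw [Finset.sum_comm]
      refine Finset.sum_congr rfl fun l _ => ?_
      rw [← Finset.sum_smul, smul_smul]
      congr 1
      rw [Finset.sum_eq_single (⟨0, by omega⟩ : Fin n)]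
      · rw [if_pos rfl]
        ring
      · intro b _ hb
        rw [if_neg (fun h => hb (Fin.ext h)), mul_zero]
      · intro h; exact absurd (Finset.mem_univ _) h
    · rw [Finset.smul_sum]
      refine Finset.sum_congr rfl fun k _ => ?_
      rw [← Finset.sum_smul, smul_smul]
      congr 1
      rw [Finset.sum_eq_single (⟨0, by omega⟩ : Fin n)]
      · rw [if_pos rfl]
        ring
      · intro b _ hb
        rw [if_neg (fun h => hb (Fin.ext h)), mul_zero]
      · intro h; exact absurd (Finset.mem_univ _) h
  -- the brTP1 side
  have esub : ∀ g : ℕ → (Fin n → ℂ),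
      (∑ i ∈ Icc 2 n, g i) = ∑ i ∈ Icc 1 n, (if 2 ≤ i then g i else 0) := by
    intro g
    rw [← Finset.sum_subset (Finset.Icc_subset_Icc_left (by omega : 1 ≤ 2))
      (fun x hx1 hx2 => if_neg (fun hc => hx2 (Finset.mem_Icc.mpr
        ⟨hc, (Finset.mem_Icc.mp hx1).2⟩)))]
    exact Finset.sum_congr rfl fun i hi => (if_pos (Finset.mem_Icc.mp hi).1).symm
  have hSh : ∀ z : Fin n → ℂ, V n (Sh2 n z * Pw) = ∑ l : Fin n, z l • Vl l := by
    intro z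
    unfold Sh2
    rw [Finset.sum_mul, V_sum]
    rw [Finset.sum_congr rfl (fun i _ => by rw [mul_assoc, V_Cmul])]
    rw [esub (fun i => nfCoeff n z i • V n (X ^ (i-2) * Pw))]
    rw [sum_Icc_one' (f := fun i => if 2 ≤ i then nfCoeff n z i • V n (X ^ (i-2) * Pw) else 0)]
    refine Finset.sum_congr rfl fun l _ => ?_
    by_cases hl : 1 ≤ (l:ℕ)
    · rw [if_pos (by omega : 2 ≤ (l:ℕ)+1), hVl]
      simp only [if_pos hl]
      rw [show (l:ℕ)+1-2 = (l:ℕ)-1 by omega, nfCoeff_apply]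
    · rw [if_neg (by omega), hVl]
      simp only [if_neg hl]
      rw [smul_zero]
  rw [hsum, brTP1_V hn1, hPofw, hSh y, hSh x,
    nfCoeff_one_eq hn1 x, nfCoeff_one_eq hn1 y]

end withhB
end PartI

section Kill

lemma binom (a : ℂ) (k : ℕ) (m : ℕ) :
    ∃ S : ℂ[X], (1 + C a * X^(k+1))^m = 1 + C ((m:ℂ)*a) * X^(k+1) + X^(k+2) * S := by
  induction m with
  | zero =>
    refine ⟨0, ?_⟩
    push_cast
    rw [zero_mul, map_zero]
    ring
  | succ m ih =>
    obtain ⟨S, hS⟩ := ih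
    refine ⟨C ((m:ℂ)*a) * C a * X^k + S + C a * X^(k+1) * S, ?_⟩
    rw [pow_succ, hS]
    have hc : C ((((m+1):ℕ):ℂ)*a) = C ((m:ℂ)*a) + C a := by
      rw [← C_add]
      congr 1
      push_cast
      ring
    rw [hc]
    ring

lemma mk_decomp (P : ℂ[X]) (m : ℕ) (c lam : ℂ) (hm : 1 ≤ m)
    (hc0 : P.coeff 0 = c) (hcm : P.coeff m = lam)
    (hmid : ∀ j, 0 < j → j < m → P.coeff j = 0) :
    ∃ R₀, P = C c + C lam * X^m + X^(m+1) * R₀ := by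
  have hdvd : X^(m+1) ∣ P - (C c + C lam * X^m) := by
    rw [Polynomial.X_pow_dvd_iff]
    intro d hd
    rw [Polynomial.coeff_sub, Polynomial.coeff_add, Polynomial.coeff_C,
      Polynomial.coeff_C_mul, Polynomial.coeff_X_pow]
    by_cases h0 : d = 0
    · subst h0
      rw [if_pos rfl, if_neg (by omega), hc0]
      ring
    · rw [if_neg h0]
      by_cases hdm : d = m
      · subst hdm
        rw [if_pos rfl, hcm]
        ring
      · rw [if_neg hdm, hmid d (by omega) (by omega)]
        ring
  obtain ⟨R₀, hR⟩ := hdvd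
  exact ⟨R₀, by linear_combination hR⟩

lemma kill (m : ℕ) (hm : 1 ≤ m) (c lam : ℂ) (hlam : lam ≠ 0) :
    ∀ (k : ℕ) (P : ℂ[X]), (∃ R₀, P = C c + C lam * X^m + X^(m+1) * R₀) →
    ∃ w R, w.coeff 0 = 0 ∧ w.coeff 1 = 1 ∧
      P.comp w = C c + C lam * X^m + X^(m+k+1) * R := by
  intro k
  induction k with
  | zero =>
    rintro P ⟨R₀, hR⟩
    exact ⟨X, R₀, Polynomial.coeff_X_zero, Polynomial.coeff_X_one, by rw [Polynomial.comp_X]; exact hR⟩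
  | succ k ih =>
    rintro P hP
    obtain ⟨w, R, hw0, hw1, hPw⟩ := ih P hP
    set e := R.coeff 0 with he
    set R' := R.divX with hR'
    have hRdec : R = X * R' + C e := by
      rw [hR', he, Polynomial.X_mul_divX_add]
    have hmne : ((m:ℂ)) ≠ 0 := Nat.cast_ne_zero.mpr (by omega)
    set t := -e / (lam * (m:ℂ)) with ht
    have hscalar : lam * ((m:ℂ) * t) + e = 0 := by
      rw [ht]
      field_simp
      ring
    have hCpoly : C lam * C ((m:ℂ)*t) + C e = (0 : ℂ[X]) := by
      rw [← C_mul, ← C_add, ← mul_assoc]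
      rw [show lam * (m:ℂ) * t = lam * ((m:ℂ) * t) by ring, hscalar, map_zero]
    set w₂ : ℂ[X] := X + C t * X^(k+2) with hw₂
    have hw₂0 : w₂.coeff 0 = 0 := by
      rw [hw₂, Polynomial.coeff_add, Polynomial.coeff_X_zero, Polynomial.coeff_C_mul,
        Polynomial.coeff_X_pow, if_neg (by omega)]
      ring
    have hw₂1 : w₂.coeff 1 = 1 := by
      rw [hw₂, Polynomial.coeff_add, Polynomial.coeff_X_one, Polynomial.coeff_C_mul,
        Polynomial.coeff_X_pow, if_neg (by omega)]
      ring
    have hw₂fact : w₂ = X * (1 + C t * X^(k+1)) := by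
      rw [hw₂]
      ring
    obtain ⟨S, hS⟩ := binom t k m
    obtain ⟨S₂, hS₂⟩ := binom t k (m+k+1)
    refine ⟨w.comp w₂, C lam * S
      + (C (((m+k+1:ℕ):ℂ)*t) * X^k + X^(k+1) * S₂) * (R.comp w₂)
      + (1 + C t * X^(k+1)) * (R'.comp w₂), ?_, ?_, ?_⟩
    · rw [c0_comp _ _ hw₂0, hw0]
    · rw [c1_comp _ _ hw₂0, hw1, hw₂1, one_mul]
    · rw [← Polynomial.comp_assoc, hPw]
      rw [Polynomial.add_comp, Polynomial.add_comp, Polynomial.C_comp,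
        Polynomial.mul_comp, Polynomial.C_comp, Polynomial.X_pow_comp,
        Polynomial.mul_comp, Polynomial.X_pow_comp]
      -- expand w₂ ^ m and w₂ ^ (m+k+1)
      have hpm : w₂ ^ m = X^m * (1 + C ((m:ℂ)*t) * X^(k+1) + X^(k+2) * S) := by
        rw [hw₂fact, mul_pow, hS]
      have hpmk : w₂ ^ (m+k+1)
          = X^(m+k+1) * (1 + C (((m+k+1:ℕ):ℂ)*t) * X^(k+1) + X^(k+2) * S₂) := by
        rw [hw₂fact, mul_pow, hS₂]
      rw [hpm, hpmk]
      -- decompose R.comp w₂ where the leading coefficient e matters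
      have hRC : R.comp w₂ = w₂ * (R'.comp w₂) + C e := by
        conv_lhs => rw [hRdec]
        rw [Polynomial.add_comp, Polynomial.mul_comp, Polynomial.X_comp, Polynomial.C_comp]
      -- now a ring identity modulo the scalar relation
      have expand : X^(m+k+1) * (C lam * C ((m:ℂ)*t) + C e) = 0 := by
        rw [hCpoly, mul_zero]
      calc C c + C lam * (X^m * (1 + C ((m:ℂ)*t) * X^(k+1) + X^(k+2) * S))
            + X^(m+k+1) * (1 + C (((m+k+1:ℕ):ℂ)*t) * X^(k+1) + X^(k+2) * S₂) * (R.comp w₂)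
          = C c + C lam * X^m
            + X^(m+(k+1)+1) * (C lam * S
              + (C (((m+k+1:ℕ):ℂ)*t) * X^k + X^(k+1) * S₂) * (R.comp w₂)
              + (1 + C t * X^(k+1)) * (R'.comp w₂)) := by
            rw [hRC, hw₂fact]
            linear_combination expand
  
end Kill

section Shapes

lemma coeff_Qof (α : ℕ → ℂ) (d : ℕ) :
    (Qof n α).coeff d = if d + 2 ≤ n then α (d + 2) else 0 := by
  unfold Qof
  rw [Polynomial.finset_sum_coeff]
  rw [Finset.sum_congr rfl (fun s _ => by rw [Polynomial.coeff_C_mul, Polynomial.coeff_X_pow])]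
  by_cases h : d + 2 ≤ n
  · rw [if_pos h, Finset.sum_eq_single (d+2)]
    · rw [if_pos (by omega), mul_one]
    · intro b hb hbne
      rw [Finset.mem_Icc] at hb
      rw [if_neg (by omega), mul_zero]
    · intro hd
      exact absurd (Finset.mem_Icc.mpr (by omega)) hd
  · rw [if_neg h, Finset.sum_eq_zero]
    intro s hs
    rw [Finset.mem_Icc] at hs
    rw [if_neg (by omega), mul_zero]

lemma shape0 : Qof n (fun _ => (0:ℂ)) = 0 := by
  unfold Qof
  simp

lemma shape2 (hn : 2 ≤ n) (s₀ : ℕ) (h3 : 3 ≤ s₀) (hs : s₀ ≤ n) (a : ℂ) :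
    Qof n (fun t => if t = 2 then (1:ℂ) else if t = s₀ then a else 0)
      = 1 + C a * X ^ (s₀ - 2) := by
  ext d
  rw [coeff_Qof, Polynomial.coeff_add, Polynomial.coeff_one, Polynomial.coeff_C_mul,
    Polynomial.coeff_X_pow]
  by_cases h : d + 2 ≤ n
  · rw [if_pos h]
    by_cases h0 : d = 0
    · rw [if_pos (by omega), if_pos h0, if_neg (by omega)]
      ring
    · rw [if_neg (by omega), if_neg h0]
      by_cases hd : d = s₀ - 2
      · rw [if_pos (by omega), if_pos hd]
        ring
      · rw [if_neg (by omega), if_neg hd]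
        ring
  · rw [if_neg h, if_neg (by omega), if_neg (by omega)]
    ring

lemma shape3 (hn : 3 ≤ n) (a : ℂ) :
    Qof n (fun t => if t = 3 then a else 0) = C a * X := by
  ext d
  rw [coeff_Qof, Polynomial.coeff_C_mul, Polynomial.coeff_X]
  by_cases h : d + 2 ≤ n
  · rw [if_pos h]
    by_cases hd : d = 1
    · rw [if_pos (by omega), if_pos hd.symm]
      ring
    · rw [if_neg (by omega), if_neg (fun hh => hd hh.symm)]
      ring
  · rw [if_neg h, if_neg (by omega)]
    ring

lemma shape4 (p : ℕ) (h4 : 4 ≤ p) (hp : p ≤ n) :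
    Qof n (fun t => if t = p then (1:ℂ) else 0) = X ^ (p - 2) := by
  ext d
  rw [coeff_Qof, Polynomial.coeff_X_pow]
  by_cases h : d + 2 ≤ n
  · rw [if_pos h]
    by_cases hd : d = p - 2
    · rw [if_pos (by omega), if_pos hd]
    · rw [if_neg (by omega), if_neg hd]
  · rw [if_neg h, if_neg (by omega)]

end Shapes

lemma good_iso (hn : 2 ≤ n) (β α : ℕ → ℂ) (F : ℂ[X]) (hF0 : F.coeff 0 = 0)
    (hF1 : F.coeff 1 ≠ 0)
    (hdvd : X ^ (n-1) ∣ ((Qof n β).comp F - C (F.coeff 1) * Qof n α)) :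
    TPIso n (brTP1 n β) (brTP1 n α) := by
  apply iso_transfer (by omega) β α F hF0 hF1
  have hPQ : (Pof n β).comp F = F^2 * ((Qof n β).comp F) := by
    rw [Pof_eq, Polynomial.mul_comp, Polynomial.X_pow_comp]
  rw [hPQ]
  have heq : F^2 * ((Qof n β).comp F) - C (F.coeff 1) * F^2 * Qof n α
      = F^2 * (((Qof n β).comp F) - C (F.coeff 1) * Qof n α) := by ring
  rw [heq]
  have h2 : X^2 ∣ F^2 := pow_dvd_pow_of_X_dvd hF0 2
  have := mul_dvd_mul h2 hdvd
  rwa [← pow_add, show 2 + (n-1) = n+1 by omega] at this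

/-- Part III: normal forms of the coefficient polynomial. -/
lemma partIII (hn : 5 ≤ n) (β : ℕ → ℂ) :
    (∃ F : ℂ[X], F.coeff 0 = 0 ∧ F.coeff 1 ≠ 0 ∧
        X^(n-1) ∣ ((Qof n β).comp F - C (F.coeff 1) * Qof n (fun _ => (0:ℂ)))) ∨
    (∃ s, 3 ≤ s ∧ s ≤ n ∧ ∃ a : ℂ, ∃ F : ℂ[X], F.coeff 0 = 0 ∧ F.coeff 1 ≠ 0 ∧
        X^(n-1) ∣ ((Qof n β).comp F - C (F.coeff 1) *
          Qof n (fun t => if t = 2 then 1 else if t = s then a else 0))) ∨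
    (∃ a : ℂ, ∃ F : ℂ[X], F.coeff 0 = 0 ∧ F.coeff 1 ≠ 0 ∧
        X^(n-1) ∣ ((Qof n β).comp F - C (F.coeff 1) *
          Qof n (fun t => if t = 3 then a else 0))) ∨
    (∃ p, 4 ≤ p ∧ p ≤ n ∧ ∃ F : ℂ[X], F.coeff 0 = 0 ∧ F.coeff 1 ≠ 0 ∧
        X^(n-1) ∣ ((Qof n β).comp F - C (F.coeff 1) *
          Qof n (fun t => if t = p then 1 else 0))) := by
  classical
  set g := Qof n β with hg
  have ghigh : ∀ d, n - 1 ≤ d → g.coeff d = 0 := fun d hd => by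
    rw [hg, coeff_Qof, if_neg (by omega)]
  by_cases hex : ∃ j, j < n-1 ∧ g.coeff j ≠ 0
  · -- nontrivial
    set m := Nat.find hex with hmdef
    obtain ⟨hmlt, hmne⟩ := Nat.find_spec hex
    have hmin : ∀ j, j < m → g.coeff j = 0 := by
      intro j hj
      have := Nat.find_min hex hj
      push_neg at this
      exact this (by omega)
    by_cases hm0 : m = 0
    · -- case A : unit
      have hc : g.coeff 0 ≠ 0 := by rw [← hm0]; exact hmne
      set c := g.coeff 0 with hcdef
      by_cases hex2 : ∃ j, 0 < j ∧ j < n-1 ∧ g.coeff j ≠ 0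
      · -- case A, nonconstant
        set m' := Nat.find hex2 with hm'def
        obtain ⟨hm'pos, hm'lt, hm'ne⟩ := Nat.find_spec hex2
        have hmin' : ∀ j, 0 < j → j < m' → g.coeff j = 0 := by
          intro j hj0 hj
          have := Nat.find_min hex2 hj
          push_neg at this
          exact this hj0 (by omega)
        set lam := g.coeff m' * c ^ m' with hlamdef
        have hlam : lam ≠ 0 := mul_ne_zero hm'ne (pow_ne_zero _ hc)
        set P := g.comp (C c * X) with hPdef
        have hP0 : P.coeff 0 = c := by
          rw [hPdef, comp_C_mul_X_coeff, pow_zero, mul_one]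
        have hPm : P.coeff m' = lam := by
          rw [hPdef, comp_C_mul_X_coeff, hlamdef]
        have hPmid : ∀ j, 0 < j → j < m' → P.coeff j = 0 := by
          intro j h0 hj
          rw [hPdef, comp_C_mul_X_coeff, hmin' j h0 hj, zero_mul]
        obtain ⟨w, R, hw0, hw1, hcw⟩ := kill m' (by omega) c lam hlam n P
          (mk_decomp P m' c lam (by omega) hP0 hPm hPmid)
        right; left
        refine ⟨m'+2, by omega, by omega, lam / c, C c * w, ?_, ?_, ?_⟩
        · rw [Polynomial.coeff_C_mul, hw0, mul_zero]
        · rw [Polynomial.coeff_C_mul, hw1, mul_one]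
          exact hc
        · have hgF : g.comp (C c * w) = P.comp w := by
            rw [hPdef, Polynomial.comp_assoc, Polynomial.mul_comp, Polynomial.C_comp,
              Polynomial.X_comp]
          have hF1v : (C c * w).coeff 1 = c := by
            rw [Polynomial.coeff_C_mul, hw1, mul_one]
          have hsh : Qof n (fun t => if t = 2 then (1:ℂ) else if t = m'+2 then lam / c else 0)
              = 1 + C (lam / c) * X ^ m' := by
            rw [shape2 (by omega) (m'+2) (by omega) (by omega), show m'+2-2 = m' by omega]
          rw [hgF, hcw, hF1v, hsh]
          refine ⟨X^(m'+2) * R, ?_⟩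
          have hclam : C c * C (lam/c) = C lam := by
            rw [← C_mul]
            congr 1
            field_simp
          have hkey : C c * (1 + C (lam/c) * X^(m')) = C c + C lam * X^(m') := by
            rw [mul_add, mul_one, ← mul_assoc, hclam]
          have hxp : (X : ℂ[X])^(m'+n+1) = X^(n-1) * X^(m'+2) := by
            rw [← pow_add]
            congr 1
            omega
          rw [hkey, hxp]
          ring
      · -- case A, constant : shape 2 with a = 0
        push_neg at hex2
        have hgc : g = C c := by
          ext d
          rw [Polynomial.coeff_C]
          by_cases h0 : d = 0
          · subst h0; rw [if_pos rfl]
          · rw [if_neg h0]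
            by_cases hd : d < n-1
            · exact hex2 d (by omega) hd
            · exact ghigh d (by omega)
        right; left
        refine ⟨3, le_rfl, by omega, 0, C c * X, ?_, ?_, ?_⟩
        · rw [Polynomial.coeff_C_mul, Polynomial.coeff_X_zero, mul_zero]
        · rw [Polynomial.coeff_C_mul, Polynomial.coeff_X_one, mul_one]
          exact hc
        · have hsh : Qof n (fun t => if t = 2 then (1:ℂ) else if t = 3 then 0 else 0)
              = 1 := by
            rw [shape2 (by omega) 3 le_rfl (by omega), map_zero, zero_mul, add_zero]
          rw [hsh, hgc, Polynomial.C_comp, Polynomial.coeff_C_mul, Polynomial.coeff_X_one,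
            mul_one]
          refine ⟨0, ?_⟩
          ring
    · by_cases hm1 : m = 1
      · -- case B
        have hc0 : g.coeff 0 = 0 := hmin 0 (by omega)
        set lam := g.coeff 1 with hlamdef
        have hlam : lam ≠ 0 := by rw [hlamdef, ← hm1]; exact hmne
        obtain ⟨w, R, hw0, hw1, hcw⟩ := kill 1 le_rfl 0 lam hlam n g
          (mk_decomp g 1 0 lam le_rfl hc0 rfl (fun j h1 h2 => by omega))
        right; right; left
        refine ⟨lam, w, hw0, by rw [hw1]; exact one_ne_zero, ?_⟩
        rw [shape3 (by omega), hw1, map_one, one_mul, hcw]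
        refine ⟨X^3 * R, ?_⟩
        have hxp : (X : ℂ[X])^(1+n+1) = X^(n-1) * X^3 := by
          rw [← pow_add]
          congr 1
          omega
        rw [hxp]
        rw [map_zero, pow_one]
        ring
      · -- case C : m ≥ 2
        have hm2 : 2 ≤ m := by omega
        set cm := g.coeff m with hcmdef
        obtain ⟨μ, hμ⟩ := IsAlgClosed.exists_pow_nat_eq (k := ℂ) cm⁻¹ (n := m-1) (by omega)
        have hμ0 : μ ≠ 0 := by
          intro h
          rw [h, zero_pow (by omega : m-1 ≠ 0)] at hμ
          exact hmne (by
            rw [← hcmdef] at *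
            exact inv_eq_zero.mp hμ.symm)
        set lam := cm * μ ^ m with hlamdef
        have hlamv : lam = μ := by
          rw [hlamdef, show m = (m-1)+1 by omega, pow_succ, ← mul_assoc, hμ,
            mul_inv_cancel₀ (by rw [hcmdef]; exact hmne), one_mul]
        have hlam : lam ≠ 0 := by rw [hlamv]; exact hμ0
        set P := g.comp (C μ * X) with hPdef
        have hP0 : P.coeff 0 = 0 := by
          rw [hPdef, comp_C_mul_X_coeff, hmin 0 (by omega), zero_mul]
        have hPm : P.coeff m = lam := by
          rw [hPdef, comp_C_mul_X_coeff, hlamdef, hcmdef]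
        have hPmid : ∀ j, 0 < j → j < m → P.coeff j = 0 := by
          intro j h0 hj
          rw [hPdef, comp_C_mul_X_coeff, hmin j hj, zero_mul]
        obtain ⟨w, R, hw0, hw1, hcw⟩ := kill m (by omega) 0 lam hlam n P
          (mk_decomp P m 0 lam (by omega) hP0 hPm hPmid)
        right; right; right
        refine ⟨m+2, by omega, by omega, C μ * w, ?_, ?_, ?_⟩
        · rw [Polynomial.coeff_C_mul, hw0, mul_zero]
        · rw [Polynomial.coeff_C_mul, hw1, mul_one]
          exact hμ0
        · have hgF : g.comp (C μ * w) = P.comp w := by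
            rw [hPdef, Polynomial.comp_assoc, Polynomial.mul_comp, Polynomial.C_comp,
              Polynomial.X_comp]
          have hF1v : (C μ * w).coeff 1 = μ := by
            rw [Polynomial.coeff_C_mul, hw1, mul_one]
          have hsh : Qof n (fun t => if t = m+2 then (1:ℂ) else 0) = X ^ m := by
            rw [shape4 (m+2) (by omega) (by omega), show m+2-2 = m by omega]
          rw [hgF, hcw, hF1v, hsh]
          refine ⟨X^(m+2) * R, ?_⟩
          have hxp : (X : ℂ[X])^(m+n+1) = X^(n-1) * X^(m+2) := by
            rw [← pow_add]
            congr 1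
            omega
          rw [hxp, map_zero, hlamv]
          ring
  · -- trivial case
    left
    push_neg at hex
    have hgz : g = 0 := by
      ext d
      rw [Polynomial.coeff_zero]
      by_cases hd : d < n-1
      · exact hex d hd
      · exact ghigh d (by omega)
    refine ⟨X, Polynomial.coeff_X_zero, by rw [Polynomial.coeff_X_one]; exact one_ne_zero, ?_⟩
    rw [Polynomial.comp_X, hgz, shape0]
    simp

end TPaux

/-- for `n ≥ 5`, every transposed `1`-Poisson structure on `μ₀ⁿ`
is isomorphic to the trivial `TP₁(0,…,0)`, to `TP₁(1,0,…,0,α,0,…,0)` with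
`α` in position `s` for some `3 ≤ s ≤ n`, to `TP₁(0,α,0,…,0)`, or to
`TP₁(0,…,0,1ₚ,0,…,0)` for some `4 ≤ p ≤ n`. -/
theorem stmt_16 (n : ℕ) (hn : 5 ≤ n)
    (B : LieBracketOn (Fin n → ℂ)) (hB : IsTransposedPoisson n 1 B) :
    TPIso n B.br (brTP1 n fun _ => 0) ∨
    (∃ s, 3 ≤ s ∧ s ≤ n ∧ ∃ α : ℂ,
      TPIso n B.br
        (brTP1 n fun t => if t = 2 then 1 else if t = s then α else 0)) ∨
    (∃ α : ℂ, TPIso n B.br (brTP1 n fun t => if t = 3 then α else 0)) ∨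
    (∃ p, 4 ≤ p ∧ p ≤ n ∧
      TPIso n B.br (brTP1 n fun t => if t = p then 1 else 0)) := by
  have hβ := TPaux.partI hB (by omega : 2 ≤ n)
  set β := nfCoeff n (B.br (nfE n 1) (nfE n 2)) with hβdef
  rcases TPaux.partIII hn β with ⟨F, h0, h1, hd⟩ | ⟨s, hs3, hsn, a, F, h0, h1, hd⟩ |
    ⟨a, F, h0, h1, hd⟩ | ⟨p, hp4, hpn, F, h0, h1, hd⟩
  · left
    rw [hβ]
    exact TPaux.good_iso (by omega) β _ F h0 h1 hd
  · right; left
    exact ⟨s, hs3, hsn, a, by rw [hβ]; exact TPaux.good_iso (by omega) β _ F h0 h1 hd⟩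
  · right; right; left
    exact ⟨a, by rw [hβ]; exact TPaux.good_iso (by omega) β _ F h0 h1 hd⟩
  · right; right; right
    exact ⟨p, hp4, hpn, by rw [hβ]; exact TPaux.good_iso (by omega) β _ F h0 h1 hd⟩
end

section
/- Let n ≥ 5 and δ ∈ ℂ with δ ∉ {0, 1, 2}. If [-,-] is a Lie bracket on μ₀ⁿ making (μ₀ⁿ, ·, [-,-]) a transposed δ-Poisson algebra, then there exist α_{n−2}, α_{n−1}, αₙ ∈ ℂ such that [e₁,e₂] = α_{n−2} e_{n−2} + α_{n−1} e_{n−1} + αₙ eₙ, [e₁,e₃] = δ(α_{n−2} e_{n−1} + α_{n−1} eₙ), [e₂,e₃] = ((δ²−δ)/2) α_{n−2} eₙ, [e₁,e₄] = ((δ²+δ)/2) α_{n−2} eₙ, and [eᵢ,eⱼ] = 0 for all other pairs 1 ≤ i < j ≤ n; that is, the structure is TP_δ(α_{n−2}, α_{n−1}, αₙ). -/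
open Finset

/-!
Write `Sₖ x = eₖ · x` and `w = [e₁, e₂]`. On basis vectors the transposed Poisson identity reads
`δ Sₖ [eᵢ, eⱼ] = [e_{i+k}, eⱼ] + [eᵢ, e_{j+k}]`. Its instances of total degree at most `6` express
`[e₁, e₃]`, `[e₂, e₃]` and `[e₁, e₄]` through `S₁ w` and `S₂ w`, and force
`δ (δ - 1) (δ - 2) S₃ w = 0`; hence `S₃ w = 0`, i.e. `w` lies in the span of `e_{n-2}, e_{n-1}, eₙ`.
Then in every total degree `m ≥ 6` the shifts `S₁`, `S₂` kill the brackets of degree `m - 1`,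
`m - 2`, so the identity with `k = 1` makes `[eᵢ, e_{m-i}]` alternate in sign along `i`, while the
identity with `k = 2` gives `[e₃, e_{m-3}] = -[e₁, e_{m-1}]`: all brackets of degree `m` vanish.
-/

lemma nfMul_add_right (n : ℕ) (z x y : Fin n → ℂ) :
    nfMul n z (x + y) = nfMul n z x + nfMul n z y := by
  funext k
  simp only [nfMul, Pi.add_apply, mul_add, ← Finset.sum_add_distrib, ite_add_zero]

lemma nfMul_smul_right (n : ℕ) (z : Fin n → ℂ) (c : ℂ) (x : Fin n → ℂ) :
    nfMul n z (c • x) = c • nfMul n z x := by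
  funext k
  simp only [nfMul, Pi.smul_apply, smul_eq_mul, Finset.mul_sum, mul_ite, mul_zero, mul_left_comm]

lemma nfMul_zero_right (n : ℕ) (z : Fin n → ℂ) : nfMul n z 0 = 0 := by
  simpa using nfMul_smul_right n z 0 0

lemma nfMul_neg_right (n : ℕ) (z x : Fin n → ℂ) : nfMul n z (-x) = -nfMul n z x := by
  simpa using nfMul_smul_right n z (-1) x

lemma nfMul_nfE_apply {n a : ℕ} (ha : 1 ≤ a) (x : Fin n → ℂ) (k : Fin n) :
    nfMul n (nfE n a) x k = if h : a ≤ (k : ℕ) then x ⟨k - a, by omega⟩ else 0 := by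
  simp only [nfMul, nfE, ite_mul, one_mul, zero_mul]
  split_ifs with h
  · rw [Finset.sum_eq_single ⟨a - 1, by omega⟩, Finset.sum_eq_single ⟨k - a, by omega⟩]
    · rw [if_pos (by simp; omega), if_pos (by simp; omega)]
    · intro j _ hj; rw [if_neg]; intro h'; exact hj (Fin.ext (by simp at h' ⊢; omega))
    · simp
    · intro i _ hi
      refine Finset.sum_eq_zero fun j _ => ?_
      rw [ite_eq_right_iff, ite_eq_right_iff]
      exact fun _ h' => absurd (Fin.ext (by simp; omega)) hi
    · simp
  · refine Finset.sum_eq_zero fun i _ => Finset.sum_eq_zero fun j _ => ?_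
    split_ifs <;> first | rfl | omega

lemma nfCoeff_succ {n : ℕ} (x : Fin n → ℂ) (k : Fin n) : nfCoeff n x (k + 1) = x k := by
  simp only [nfCoeff, add_left_inj, Fin.val_inj, Finset.sum_ite_eq', Finset.mem_univ, if_true]

lemma nfE_eq_zero_of_lt {n i : ℕ} (h : n < i) : nfE n i = 0 := by
  funext k
  simp only [nfE, Pi.zero_apply, ite_eq_right_iff]
  omega

lemma nfMul_nfE_nfE {n a b : ℕ} (ha : 1 ≤ a) (hb : 1 ≤ b) :
    nfMul n (nfE n a) (nfE n b) = nfE n (a + b) := by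
  funext k
  rw [nfMul_nfE_apply ha]
  simp only [nfE]
  split_ifs <;> first | rfl | omega

lemma nfMul_nfE_nfMul_nfE {n a b : ℕ} (ha : 1 ≤ a) (hb : 1 ≤ b) (x : Fin n → ℂ) :
    nfMul n (nfE n a) (nfMul n (nfE n b) x) = nfMul n (nfE n (a + b)) x := by
  funext k
  simp only [nfMul_nfE_apply ha, nfMul_nfE_apply hb, nfMul_nfE_apply (le_add_right ha)]
  split_ifs <;> first | rfl | omega | exact congrArg x (Fin.ext (by simp; omega))

lemma nfMul_nfE_eq_zero_of_le {n a b : ℕ} (ha : 1 ≤ a) (hab : a ≤ b) {x : Fin n → ℂ}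
    (h : nfMul n (nfE n a) x = 0) : nfMul n (nfE n b) x = 0 := by
  funext k
  rw [nfMul_nfE_apply (ha.trans hab), Pi.zero_apply]
  split_ifs with hk
  · simpa [nfMul_nfE_apply ha] using congrFun h ⟨k - b + a, by omega⟩
  · rfl

lemma eq_of_nfMul_nfE_three_eq_zero {n : ℕ} (hn : 3 ≤ n) {x : Fin n → ℂ}
    (h : nfMul n (nfE n 3) x = 0) :
    x = nfCoeff n x (n - 2) • nfE n (n - 2) + nfCoeff n x (n - 1) • nfE n (n - 1)
      + nfCoeff n x n • nfE n n := by
  funext k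
  simp only [Pi.add_apply, Pi.smul_apply, nfE, smul_eq_mul, mul_ite, mul_one, mul_zero]
  by_cases hk : n ≤ k + 3
  · rcases (show k + 1 = n - 2 ∨ k + 1 = n - 1 ∨ k + 1 = n by omega) with e | e | e
    · rw [if_pos e, if_neg (by omega), if_neg (by omega), ← nfCoeff_succ x k, e]; ring
    · rw [if_neg (by omega), if_pos e, if_neg (by omega), ← nfCoeff_succ x k, e]; ring
    · rw [if_neg (by omega), if_neg (by omega), if_pos e, ← nfCoeff_succ x k, e]; ring
  · rw [if_neg (by omega), if_neg (by omega), if_neg (by omega)]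
    simpa [nfMul_nfE_apply] using congrFun h ⟨k + 3, by omega⟩

lemma LieBracketOn.br_swap {L : Type*} [AddCommGroup L] [Module ℂ L] (B : LieBracketOn L)
    (x y : L) : B.br y x = -B.br x y := by
  have h := B.alt (x + y)
  rw [B.add_left, B.add_right, B.add_right, B.alt, B.alt, zero_add, add_zero] at h
  exact eq_neg_of_add_eq_zero_right h

namespace IsTransposedPoisson

variable {n : ℕ} {δ : ℂ} {B : LieBracketOn (Fin n → ℂ)}

lemma smul_nfMul_br_nfE (hB : IsTransposedPoisson n δ B) {i j k : ℕ}
    (hi : 1 ≤ i) (hj : 1 ≤ j) (hk : 1 ≤ k) :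
    δ • nfMul n (nfE n k) (B.br (nfE n i) (nfE n j))
      = B.br (nfE n (i + k)) (nfE n j) + B.br (nfE n i) (nfE n (j + k)) := by
  simpa only [nfMul_nfE_nfE hk hi, nfMul_nfE_nfE hk hj, add_comm k] using
    hB (nfE n i) (nfE n j) (nfE n k)

lemma br_one_three (hB : IsTransposedPoisson n δ B) :
    B.br (nfE n 1) (nfE n 3) = δ • nfMul n (nfE n 1) (B.br (nfE n 1) (nfE n 2)) := by
  simpa [B.alt] using (hB.smul_nfMul_br_nfE le_rfl one_le_two le_rfl).symm

lemma br_two_three_and_br_one_four (hB : IsTransposedPoisson n δ B) :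
    B.br (nfE n 2) (nfE n 3)
        = ((δ ^ 2 - δ) / 2) • nfMul n (nfE n 2) (B.br (nfE n 1) (nfE n 2)) ∧
      B.br (nfE n 1) (nfE n 4)
        = ((δ ^ 2 + δ) / 2) • nfMul n (nfE n 2) (B.br (nfE n 1) (nfE n 2)) := by
  have h131 := hB.smul_nfMul_br_nfE (i := 1) (j := 3) (k := 1) le_rfl (by norm_num) le_rfl
  have h122 := hB.smul_nfMul_br_nfE (i := 1) (j := 2) (k := 2) le_rfl one_le_two one_le_two
  simp only [Nat.reduceAdd] at h131 h122
  rw [hB.br_one_three, nfMul_smul_right, nfMul_nfE_nfMul_nfE le_rfl le_rfl] at h131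
  rw [B.br_swap (nfE n 2) (nfE n 3)] at h122
  constructor
  · linear_combination (norm := module) (1 / 2 : ℂ) • h122 - (1 / 2 : ℂ) • h131
  · linear_combination (norm := module) (-1 / 2 : ℂ) • h122 - (1 / 2 : ℂ) • h131

lemma nfMul_three_br_one_two (hB : IsTransposedPoisson n δ B) (hδ0 : δ ≠ 0) (hδ1 : δ ≠ 1)
    (hδ2 : δ ≠ 2) : nfMul n (nfE n 3) (B.br (nfE n 1) (nfE n 2)) = 0 := by
  obtain ⟨h23, h14⟩ := hB.br_two_three_and_br_one_four
  have h231 := hB.smul_nfMul_br_nfE (i := 2) (j := 3) (k := 1) one_le_two (by norm_num) le_rfl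
  have h141 := hB.smul_nfMul_br_nfE (i := 1) (j := 4) (k := 1) le_rfl (by norm_num) le_rfl
  have h123 := hB.smul_nfMul_br_nfE (i := 1) (j := 2) (k := 3) le_rfl one_le_two (by norm_num)
  rw [B.alt, zero_add, h23, nfMul_smul_right, nfMul_nfE_nfMul_nfE le_rfl one_le_two] at h231
  rw [h14, nfMul_smul_right, nfMul_nfE_nfMul_nfE le_rfl one_le_two] at h141
  simp only [Nat.reduceAdd] at h231 h141 h123
  rw [B.br_swap (nfE n 2) (nfE n 4)] at h123
  have key : (δ * (δ - 1) * (δ - 2)) • nfMul n (nfE n 3) (B.br (nfE n 1) (nfE n 2)) = 0 := by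
    linear_combination (norm := module) (2 : ℂ) • h123 - (2 : ℂ) • h141 + (4 : ℂ) • h231
  simpa [hδ0, sub_ne_zero.mpr hδ1, sub_ne_zero.mpr hδ2] using key

lemma br_nfE_eq_zero_of_nfMul_eq_zero (hB : IsTransposedPoisson n δ B) {m : ℕ} (hm : 4 ≤ m)
    (hkill : ∀ i j k, 1 ≤ i → 1 ≤ j → 1 ≤ k → i + j + k = m →
      nfMul n (nfE n k) (B.br (nfE n i) (nfE n j)) = 0)
    {i j : ℕ} (hi : 1 ≤ i) (hj : 1 ≤ j) (hij : i + j = m) : B.br (nfE n i) (nfE n j) = 0 := by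
  have hstep : ∀ i j, 1 ≤ i → 1 ≤ j → i + j + 1 = m →
      B.br (nfE n (i + 1)) (nfE n j) = -B.br (nfE n i) (nfE n (j + 1)) := fun i j hi hj h => by
    have := hB.smul_nfMul_br_nfE hi hj le_rfl
    rw [hkill i j 1 hi hj le_rfl h, smul_zero] at this
    exact eq_neg_of_add_eq_zero_left this.symm
  have hfirst : B.br (nfE n 1) (nfE n (m - 1)) = 0 := by
    have h2 := hB.smul_nfMul_br_nfE (i := 1) (j := m - 3) (k := 2) le_rfl (by omega) one_le_two
    rw [hkill 1 (m - 3) 2 le_rfl (by omega) one_le_two (by omega), smul_zero,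
      show m - 3 + 2 = m - 1 by omega] at h2
    have h21 := hstep 2 (m - 3) one_le_two (by omega) (by omega)
    have h11 := hstep 1 (m - 2) le_rfl (by omega) (by omega)
    rw [show m - 3 + 1 = m - 2 by omega] at h21
    rw [show m - 2 + 1 = m - 1 by omega] at h11
    simp only [Nat.reduceAdd] at h2 h21 h11
    linear_combination (norm := module) (-1 / 2 : ℂ) • (h2 + h21 - h11)
  obtain ⟨j, rfl⟩ : ∃ j', j = m - i := ⟨j, by omega⟩
  induction i, hi using Nat.le_induction with
  | base => exact hfirst
  | succ i hi ih =>
    rw [show m - (i + 1) = m - i - 1 by omega, hstep i (m - i - 1) hi (by omega) (by omega),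
      show m - i - 1 + 1 = m - i by omega, ih (by omega) (by omega), neg_zero]

lemma nfMul_br_nfE_eq_zero_of_le_five (hB : IsTransposedPoisson n δ B)
    (hw : nfMul n (nfE n 3) (B.br (nfE n 1) (nfE n 2)) = 0) {i j k : ℕ}
    (hi : 1 ≤ i) (hj : 1 ≤ j) (hk : 1 ≤ k) (hij : i + j ≤ 5) (hijk : 6 ≤ i + j + k) :
    nfMul n (nfE n k) (B.br (nfE n i) (nfE n j)) = 0 := by
  wlog hle : i ≤ j generalizing i j
  · rw [B.br_swap, nfMul_neg_right, this hj hi (by omega) (by omega) (by omega), neg_zero]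
  have hw' : ∀ p, 3 ≤ p → nfMul n (nfE n p) (B.br (nfE n 1) (nfE n 2)) = 0 :=
    fun p hp => nfMul_nfE_eq_zero_of_le (by norm_num) hp hw
  obtain rfl | hlt := hle.eq_or_lt
  · rw [B.alt, nfMul_zero_right]
  obtain ⟨rfl, rfl⟩ | ⟨rfl, rfl⟩ | ⟨rfl, rfl⟩ | ⟨rfl, rfl⟩ :
      (i = 1 ∧ j = 2) ∨ (i = 1 ∧ j = 3) ∨ (i = 1 ∧ j = 4) ∨ (i = 2 ∧ j = 3) := by omega
  · exact hw' k (by omega)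
  · rw [hB.br_one_three, nfMul_smul_right, nfMul_nfE_nfMul_nfE hk le_rfl, hw' _ (by omega),
      smul_zero]
  · rw [hB.br_two_three_and_br_one_four.2, nfMul_smul_right, nfMul_nfE_nfMul_nfE hk one_le_two,
      hw' _ (by omega), smul_zero]
  · rw [hB.br_two_three_and_br_one_four.1, nfMul_smul_right, nfMul_nfE_nfMul_nfE hk one_le_two,
      hw' _ (by omega), smul_zero]

lemma br_nfE_eq_zero_of_six_le (hB : IsTransposedPoisson n δ B)
    (hw : nfMul n (nfE n 3) (B.br (nfE n 1) (nfE n 2)) = 0) {i j : ℕ}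
    (hi : 1 ≤ i) (hj : 1 ≤ j) (hij : 6 ≤ i + j) : B.br (nfE n i) (nfE n j) = 0 := by
  induction hm : i + j using Nat.strong_induction_on generalizing i j with
  | _ m ih =>
    refine hB.br_nfE_eq_zero_of_nfMul_eq_zero (by omega) (fun i' j' k hi' hj' hk hm' => ?_) hi hj hm
    by_cases hlow : i' + j' ≤ 5
    · exact hB.nfMul_br_nfE_eq_zero_of_le_five hw hi' hj' hk hlow (by omega)
    · rw [ih (i' + j') (by omega) hi' hj' (by omega) rfl, nfMul_zero_right]

end IsTransposedPoisson

/-- for `n ≥ 5` and `δ ∉ {0,1,2}`, any transposed `δ`-Poisson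
structure on `μ₀ⁿ` is of the form `TP_δ(α_{n-2}, α_{n-1}, αₙ)`. -/
theorem stmt_17 (n : ℕ) (hn : 5 ≤ n) (δ : ℂ)
    (hδ0 : δ ≠ 0) (hδ1 : δ ≠ 1) (hδ2 : δ ≠ 2)
    (B : LieBracketOn (Fin n → ℂ)) (hB : IsTransposedPoisson n δ B) :
    ∃ a b c : ℂ,
      B.br (nfE n 1) (nfE n 2) =
        a • nfE n (n-2) + b • nfE n (n-1) + c • nfE n n ∧
      B.br (nfE n 1) (nfE n 3) = δ • (a • nfE n (n-1) + b • nfE n n) ∧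
      B.br (nfE n 2) (nfE n 3) = ((δ^2 - δ)/2 * a) • nfE n n ∧
      B.br (nfE n 1) (nfE n 4) = ((δ^2 + δ)/2 * a) • nfE n n ∧
      ∀ i j, 1 ≤ i → i < j → j ≤ n →
        ¬((i = 1 ∧ j = 2) ∨ (i = 1 ∧ j = 3) ∨ (i = 2 ∧ j = 3) ∨
          (i = 1 ∧ j = 4)) →
        B.br (nfE n i) (nfE n j) = 0 := by
  set w := B.br (nfE n 1) (nfE n 2)
  have hw : nfMul n (nfE n 3) w = 0 := hB.nfMul_three_br_one_two hδ0 hδ1 hδ2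
  have hexp := eq_of_nfMul_nfE_three_eq_zero (by omega) hw
  set a := nfCoeff n w (n - 2)
  set b := nfCoeff n w (n - 1)
  set c := nfCoeff n w n
  have hS1 : nfMul n (nfE n 1) w = a • nfE n (n - 1) + b • nfE n n := by
    rw [hexp]
    simp only [nfMul_add_right, nfMul_smul_right]
    rw [nfMul_nfE_nfE le_rfl (by omega), nfMul_nfE_nfE le_rfl (by omega),
      nfMul_nfE_nfE le_rfl (by omega), nfE_eq_zero_of_lt (show n < 1 + n by omega),
      show 1 + (n - 2) = n - 1 by omega, show 1 + (n - 1) = n by omega, smul_zero, add_zero]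
  have hS2 : nfMul n (nfE n 2) w = a • nfE n n := by
    rw [hexp]
    simp only [nfMul_add_right, nfMul_smul_right]
    rw [nfMul_nfE_nfE one_le_two (by omega), nfMul_nfE_nfE one_le_two (by omega),
      nfMul_nfE_nfE one_le_two (by omega), nfE_eq_zero_of_lt (show n < 2 + (n - 1) by omega),
      nfE_eq_zero_of_lt (show n < 2 + n by omega), show 2 + (n - 2) = n by omega,
      smul_zero, smul_zero, add_zero, add_zero]
  obtain ⟨h23, h14⟩ := hB.br_two_three_and_br_one_four
  refine ⟨a, b, c, hexp, by rw [hB.br_one_three, hS1], by rw [h23, hS2, smul_smul],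
    by rw [h14, hS2, smul_smul], fun i j hi hij _ hne => ?_⟩
  exact hB.br_nfE_eq_zero_of_six_le hw hi (by omega) (by omega)
end

section
/- Let n ≥ 1 and δ ∈ ℂ. If [-,-] is a Lie bracket on μ₀ⁿ making (μ₀ⁿ, ·, [-,-]) a δ-Poisson algebra, then [x, y] = 0 for all x, y ∈ μ₀ⁿ; that is, every δ-Poisson algebra structure on μ₀ⁿ is trivial. -/
open Finset

/-!
The element `e₁` generates `μ₀ⁿ` as an algebra (`e_{k+1} = e_k · e₁`), and the
`δ`-Poisson identity `[x, y·z] = δ([x,y]·z + y·[x,z])` makes the centralizer `{y | [x,y] = 0}`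
of every `x` closed under `·`. Hence a centralizer containing `e₁` is everything. This applies first to
`x = e₁` itself, since `[e₁,e₁] = 0`; by antisymmetry `e₁` then lies in every centralizer.
-/

namespace LieBracketOn

variable {L : Type*} [AddCommGroup L] [Module ℂ L] (B : LieBracketOn L)

theorem br_zero_right (x : L) : B.br x 0 = 0 := by
  simpa using B.smul_right 0 x 0

theorem br_swap_s19 (x y : L) : B.br x y = -B.br y x := by
  have h := B.alt (x + y)
  rw [B.add_left, B.add_right, B.add_right, B.alt, B.alt, zero_add, add_zero] at h
  exact eq_neg_of_add_eq_zero_left h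

def centralizer (x : L) : Submodule ℂ L where
  carrier := {y | B.br x y = 0}
  zero_mem' := B.br_zero_right x
  add_mem' {y z} hy hz := by simp_all [B.add_right]
  smul_mem' c y hy := by simp_all [B.smul_right]

theorem mem_centralizer {x y : L} : y ∈ B.centralizer x ↔ B.br x y = 0 := Iff.rfl

end LieBracketOn

section NullFiliform

variable {n : ℕ}

theorem zero_nfMul (y : Fin n → ℂ) : nfMul n 0 y = 0 := by
  ext
  simp [nfMul]

theorem nfMul_zero (x : Fin n → ℂ) : nfMul n x 0 = 0 := by
  ext
  simp [nfMul]

theorem nfE_succ_eq_single (k : Fin n) : nfE n (k + 1) = Pi.single k 1 := by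
  ext j
  simp [nfE, Pi.single_apply, Fin.ext_iff]

theorem nfE_succ_of_le {a : ℕ} (ha : n ≤ a) : nfE n (a + 1) = 0 := by
  ext j
  simp only [nfE, Pi.zero_apply, ite_eq_right_iff]
  omega

theorem nfMul_nfE_succ (a b : ℕ) :
    nfMul n (nfE n (a + 1)) (nfE n (b + 1)) = nfE n (a + b + 2) := by
  ext k
  rcases lt_or_ge a n with ha | ha
  · rcases lt_or_ge b n with hb | hb
    · rw [nfE_succ_eq_single ⟨a, ha⟩, nfE_succ_eq_single ⟨b, hb⟩]
      simp only [nfMul, nfE, Pi.single_apply, mul_ite, mul_one, mul_zero]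
      rw [Fintype.sum_eq_single ⟨a, ha⟩ (by simp +contextual),
        Fintype.sum_eq_single ⟨b, hb⟩ (by simp +contextual)]
      simp only [if_true]
      congr 1
      simp
      omega
    · rw [nfE_succ_of_le hb]
      simp [nfMul, nfE]
      omega
  · rw [nfE_succ_of_le ha]
    simp [nfMul, nfE]
    omega

theorem Submodule.eq_top_of_nfE_one_mem (S : Submodule ℂ (Fin n → ℂ)) (h₁ : nfE n 1 ∈ S)
    (hmul : ∀ x ∈ S, ∀ y ∈ S, nfMul n x y ∈ S) : S = ⊤ := by
  have hE : ∀ k : ℕ, nfE n (k + 1) ∈ S := by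
    intro k
    induction k with
    | zero => exact h₁
    | succ k ih => exact nfMul_nfE_succ k 0 ▸ hmul _ ih _ h₁
  refine eq_top_iff.2 ((Pi.basisFun ℂ (Fin n)).span_eq.ge.trans (Submodule.span_le.2 ?_))
  rintro _ ⟨k, rfl⟩
  simpa [nfE_succ_eq_single] using hE k

variable {δ : ℂ} {B : LieBracketOn (Fin n → ℂ)}

theorem IsDeltaPoisson.mul_mem_centralizer (hB : IsDeltaPoisson n δ B) {x y z : Fin n → ℂ}
    (hy : y ∈ B.centralizer x) (hz : z ∈ B.centralizer x) :
    nfMul n y z ∈ B.centralizer x := by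
  rw [LieBracketOn.mem_centralizer] at hy hz ⊢
  rw [hB, hy, hz, zero_nfMul, nfMul_zero, add_zero, smul_zero]

theorem IsDeltaPoisson.br_eq_zero_of_br_nfE_one (hB : IsDeltaPoisson n δ B) {x : Fin n → ℂ}
    (hx : B.br x (nfE n 1) = 0) (y : Fin n → ℂ) : B.br x y = 0 := by
  have hC := (B.centralizer x).eq_top_of_nfE_one_mem hx
    fun _ hy _ hz => hB.mul_mem_centralizer hy hz
  exact (B.mem_centralizer).1 (hC ▸ Submodule.mem_top)

end NullFiliform

theorem stmt_19_general (n : ℕ) (δ : ℂ)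
    (B : LieBracketOn (Fin n → ℂ)) (hB : IsDeltaPoisson n δ B) :
    ∀ x y, B.br x y = 0 := by
  have he₁ : ∀ y, B.br (nfE n 1) y = 0 := hB.br_eq_zero_of_br_nfE_one (B.alt _)
  intro x
  exact hB.br_eq_zero_of_br_nfE_one (by rw [B.br_swap_s19, he₁, neg_zero])

/-- for `n ≥ 1` and any `δ ∈ ℂ`, every `δ`-Poisson algebra
structure on `μ₀ⁿ` is trivial: `[x,y] = 0` for all `x, y`. -/
theorem stmt_19 (n : ℕ) (hn : 1 ≤ n) (δ : ℂ)
    (B : LieBracketOn (Fin n → ℂ)) (hB : IsDeltaPoisson n δ B) :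
    ∀ x y, B.br x y = 0 :=
  stmt_19_general n δ B hB
end
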